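/- arXiv:2504.15885 — 8 statements merged into one kernel-verified Lean document; each statement's English description precedes it below -/
import Mathlib

section
/- Every extreme point x of the polyhedron PARTIAL-LP-MS(P,t,T) has at most m fractional jobs, i.e. the number of jobs j for which x_{j,i} ∉ {0,1} for some machine i is at most m. -/
/-- The feasible region of `PARTIAL-LP-MS(P,t,T)`, embedded in `ℝ^{n×m}` by
requiring `x j i = 0` for pairs outside `S_T = {(j,i) : p j i ≤ T}`. -/
def PartialLPMS (n m : ℕ) (p : Fin n → Fin m → ℝ) (t : Fin m → ℝ) (T : ℝ) :
    Set (Fin n → Fin m → ℝ) :=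
  {x | (∀ j i, 0 ≤ x j i) ∧
       (∀ j i, T < p j i → x j i = 0) ∧
       (∀ j, ∑ i, x j i = 1) ∧
       (∀ i, ∑ j, p j i * x j i ≤ T - t i)}

/-- Job `j` is fractional in `x` : some coordinate of row `j` is neither `0` nor `1`. -/
def FracJob {n m : ℕ} (x : Fin n → Fin m → ℝ) (j : Fin n) : Prop :=
  ∃ i, x j i ≠ 0 ∧ x j i ≠ 1

/-!
At an extreme point `x`, the columns of the constraint system (one row per job, one per machine)
indexed by the support of `x` are linearly independent: otherwise a kernel vector supported there
could be added to and subtracted from `x` in small multiples without leaving the polytope. Hence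
`x` has at most `n + m` nonzero entries. Every job has at least one of them and every fractional
job at least two, so `n + #fractional ≤ n + m`.
-/

open Finset Module

lemma eq_zero_of_add_mem_of_sub_mem_extremePoints {𝕜 E : Type*} [Field 𝕜] [LinearOrder 𝕜]
    [IsStrictOrderedRing 𝕜] [AddCommGroup E] [Module 𝕜 E] {A : Set E} {x v : E}
    (hx : x ∈ A.extremePoints 𝕜) (hadd : x + v ∈ A) (hsub : x - v ∈ A) : v = 0 := by
  have hmid : x ∈ openSegment 𝕜 (x + v) (x - v) := by
    simpa using midpoint_mem_openSegment (𝕜 := 𝕜) (x + v) (x - v)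
  simpa using hx.2 hadd hsub hmid

section Support

variable {ι : Type*} [Fintype ι]

lemma exists_ne_zero_mem_ker_of_finrank_lt_card {K V : Type*} [Field K] [AddCommGroup V]
    [Module K V] [FiniteDimensional K V] (L : (ι → K) →ₗ[K] V) (s : Finset ι)
    (h : finrank K V < #s) : ∃ d ≠ 0, L d = 0 ∧ ∀ a ∉ s, d a = 0 := by
  classical
  let R := L.prod (LinearMap.funLeft K K (Subtype.val : {a // a ∉ s} → ι))
  have hker : LinearMap.ker R ≠ ⊥ := by
    apply LinearMap.ker_ne_bot_of_finrank_lt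
    have := s.card_le_univ
    simp only [finrank_prod, finrank_fintype_fun_eq_card, Fintype.card_subtype_compl,
      Fintype.card_coe]
    omega
  obtain ⟨d, hd, hd0⟩ := Submodule.exists_mem_ne_zero_of_ne_bot hker
  rw [LinearMap.mem_ker] at hd
  exact ⟨d, hd0, congrArg Prod.fst hd, fun a ha => congrFun (congrArg Prod.snd hd) ⟨a, ha⟩⟩

lemma exists_pos_mul_abs_le {x d : ι → ℝ} (hx : ∀ a, 0 ≤ x a) (hd : ∀ a, x a = 0 → d a = 0) :
    ∃ ε > 0, ∀ a, ε * |d a| ≤ x a := by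
  have hsmall : ∀ a, ∀ᶠ ε in nhdsWithin (0 : ℝ) (Set.Ioi 0), ε * |d a| ≤ x a := by
    intro a
    rcases (hx a).eq_or_lt with hxa | hxa
    · simp [hd a hxa.symm, ← hxa]
    · have hlim : Filter.Tendsto (fun ε : ℝ => ε * |d a|) (nhdsWithin 0 (Set.Ioi 0)) (nhds 0) :=
        ((continuous_mul_const |d a|).tendsto' 0 0 (zero_mul _)).mono_left nhdsWithin_le_nhds
      exact hlim.eventually (ge_mem_nhds hxa)
  obtain ⟨ε, hε, hεpos⟩ :=
    ((Filter.eventually_all.2 hsmall).and self_mem_nhdsWithin).exists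
  exact ⟨ε, hεpos, hε⟩

lemma one_lt_card_support_of_sum_eq_one {v : ι → ℝ} (hv : ∑ a, v a = 1) {a : ι}
    (h0 : v a ≠ 0) (h1 : v a ≠ 1) : 1 < #{b | v b ≠ 0} := by
  by_contra! hle
  have hsum : ∑ b, v b = v a := by
    refine sum_eq_single a (fun b _ hba => ?_) (by simp)
    by_contra hb
    exact hba (card_le_one.1 hle b (by simpa using hb) a (by simpa using h0))
  exact h1 (hsum ▸ hv)

end Support

def constraintMap {n m : ℕ} (p : Fin n → Fin m → ℝ) :
    (Fin n × Fin m → ℝ) →ₗ[ℝ] (Fin n → ℝ) × (Fin m → ℝ) where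
  toFun d := (fun j => ∑ i, d (j, i), fun i => ∑ j, p j i * d (j, i))
  map_add' d e := by ext <;> simp [sum_add_distrib, mul_add]
  map_smul' c d := by ext <;> simp [mul_sum, mul_left_comm]

lemma constraintMap_eq_zero_iff {n m : ℕ} {p : Fin n → Fin m → ℝ} {d : Fin n × Fin m → ℝ} :
    constraintMap p d = 0 ↔
      (∀ j, ∑ i, d (j, i) = 0) ∧ ∀ i, ∑ j, p j i * d (j, i) = 0 := by
  simp [constraintMap, Prod.ext_iff, funext_iff]

section PartialLPMS

variable {n m : ℕ} {p : Fin n → Fin m → ℝ} {t : Fin m → ℝ} {T : ℝ}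

lemma card_add_card_fracJob_le_card_support {x : Fin n → Fin m → ℝ}
    [DecidablePred (FracJob x)] (hrow : ∀ j, ∑ i, x j i = 1) :
    n + #{j | FracJob x j} ≤ #{a : Fin n × Fin m | x a.1 a.2 ≠ 0} := by
  have hjob : ∀ j, 1 + (if FracJob x j then 1 else 0) ≤ #{i | x j i ≠ 0} := by
    intro j
    split_ifs with hfrac
    · obtain ⟨i, hi0, hi1⟩ := hfrac
      exact one_lt_card_support_of_sum_eq_one (hrow j) hi0 hi1
    · obtain ⟨i, -, hi⟩ :=
        exists_ne_zero_of_sum_ne_zero (s := univ) (f := x j) (by simp [hrow j])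
      exact card_pos.2 ⟨i, by simpa using hi⟩
  calc n + #{j | FracJob x j} = ∑ j, (1 + if FracJob x j then 1 else 0) := by
        rw [sum_add_distrib, card_filter]
        simp
    _ ≤ ∑ j, #{i | x j i ≠ 0} := sum_le_sum fun j _ => hjob j
    _ = #{a : Fin n × Fin m | x a.1 a.2 ≠ 0} := by
        simp only [card_filter, Fintype.sum_prod_type]

lemma add_mem_partialLPMS {x d : Fin n → Fin m → ℝ} (hx : x ∈ PartialLPMS n m p t T)
    (hrow : ∀ j, ∑ i, d j i = 0) (hload : ∀ i, ∑ j, p j i * d j i = 0)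
    (hd : ∀ j i, |d j i| ≤ x j i) : x + d ∈ PartialLPMS n m p t T := by
  obtain ⟨-, hxzero, hxrow, hxload⟩ := hx
  refine ⟨fun j i => ?_, fun j i hji => ?_, fun j => ?_, fun i => ?_⟩
  · show 0 ≤ x j i + d j i
    linarith [neg_abs_le (d j i), hd j i]
  · have hx0 := hxzero j i hji
    rw [Pi.add_apply, Pi.add_apply, hx0, zero_add]
    exact abs_nonpos_iff.1 (hx0 ▸ hd j i)
  · simp [sum_add_distrib, hxrow j, hrow j]
  · simpa [mul_add, sum_add_distrib, hload i] using hxload i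

lemma card_support_le_of_mem_extremePoints {x : Fin n → Fin m → ℝ}
    (hx : x ∈ (PartialLPMS n m p t T).extremePoints ℝ) :
    #{a : Fin n × Fin m | x a.1 a.2 ≠ 0} ≤ n + m := by
  by_contra! hlarge
  obtain ⟨d, hd0, hker, hsupp⟩ := exists_ne_zero_mem_ker_of_finrank_lt_card (constraintMap p)
    {a : Fin n × Fin m | x a.1 a.2 ≠ 0} (by simpa using hlarge)
  obtain ⟨hrow, hload⟩ := constraintMap_eq_zero_iff.1 hker
  obtain ⟨ε, hε, hεd⟩ := exists_pos_mul_abs_le (x := fun a : Fin n × Fin m => x a.1 a.2) (d := d)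
    (fun a => hx.1.1 a.1 a.2) (fun a ha => hsupp a (by simpa using ha))
  set v : Fin n → Fin m → ℝ := fun j i => ε * d (j, i)
  have hvrow : ∀ j, ∑ i, v j i = 0 := fun j => by simp [v, ← mul_sum, hrow j]
  have hvload : ∀ i, ∑ j, p j i * v j i = 0 := fun i => by
    simp [v, mul_left_comm, ← mul_sum, hload i]
  have hvx : ∀ j i, |v j i| ≤ x j i := fun j i => by
    simpa [v, abs_mul, abs_of_pos hε] using hεd (j, i)
  have hsub : x - v ∈ PartialLPMS n m p t T := by
    rw [sub_eq_add_neg]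
    exact add_mem_partialLPMS hx.1 (by simpa using hvrow) (by simpa using hvload)
      (by simpa using hvx)
  have hv : v = 0 := eq_zero_of_add_mem_of_sub_mem_extremePoints hx
    (add_mem_partialLPMS hx.1 hvrow hvload hvx) hsub
  exact hd0 (funext fun a => by simpa [v, hε.ne'] using congrFun (congrFun hv a.1) a.2)

end PartialLPMS

open Classical in
theorem extremePoint_card_fracJobs_le_general
    (n m : ℕ) (p : Fin n → Fin m → ℝ)
    (t : Fin m → ℝ) (T : ℝ)
    (x : Fin n → Fin m → ℝ)
    (hx : x ∈ Set.extremePoints ℝ (PartialLPMS n m p t T)) :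
    (Finset.univ.filter (fun j => FracJob x j)).card ≤ m := by
  have hfrac := card_add_card_fracJob_le_card_support hx.1.2.2.1
  have hsupp := card_support_le_of_mem_extremePoints hx
  omega

open Classical in
/-- Every extreme point of `PARTIAL-LP-MS(P,t,T)` has at most `m` fractional jobs. -/
theorem extremePoint_card_fracJobs_le
    (n m : ℕ) (p : Fin n → Fin m → ℝ) (hp : ∀ j i, 0 < p j i)
    (t : Fin m → ℝ) (ht : ∀ i, 0 ≤ t i) (T : ℝ) (hT : 0 ≤ T)
    (x : Fin n → Fin m → ℝ)
    (hx : x ∈ Set.extremePoints ℝ (PartialLPMS n m p t T)) :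
    (Finset.univ.filter (fun j => FracJob x j)).card ≤ m :=
  extremePoint_card_fracJobs_le_general n m p t T x hx
end

section
/- For every extreme point x of PARTIAL-LP-MS(P,t,T) there exists an injective map σ from the set of fractional jobs of x into the set of machines such that x_{j,σ(j)} > 0 (in particular (j,σ(j)) ∈ S_T) for every fractional job j. -/
/-!
Call a pair `(j, i)` fractional if `0 < x j i < 1`. If some set `E` of pairs on which `x` is
positive had more elements than the jobs and machines it touches, the homogeneous job and load
constraints restricted to `E` would have a nonzero solution `z` supported on `E`; then `x ± ε z`
is feasible for small `ε > 0`, so `x` is not extreme. Hence `|E| ≤ |J(E)| + |I(E)|` at an extreme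
point. A fractional job has at least two fractional pairs, so a set `S` of fractional jobs gives
`2 |S| ≤ |S| + |N(S)|`, where `N(S)` are the machines fractionally used by `S`: this is Hall's
condition for matching the fractional jobs into the machines.
-/

open Finset Filter Topology

theorem eq_zero_of_add_mem_of_sub_mem_of_mem_extremePoints {𝕜 E : Type*} [Field 𝕜]
    [LinearOrder 𝕜] [IsStrictOrderedRing 𝕜] [AddCommGroup E] [Module 𝕜 E] {A : Set E} {x y : E}
    (hx : x ∈ A.extremePoints 𝕜) (hadd : x + y ∈ A) (hsub : x - y ∈ A) : y = 0 := by
  have hmid : x ∈ openSegment 𝕜 (x - y) (x + y) :=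
    ⟨1 / 2, 1 / 2, by norm_num, by norm_num, by norm_num, by
      rw [← smul_add, sub_add_add_cancel, ← two_smul 𝕜 x, smul_smul]; norm_num⟩
  simpa using hx.2 hsub hadd hmid

theorem exists_pos_abs_mul_le {ι : Type*} [Finite ι] {x z : ι → ℝ} (hx : 0 ≤ x)
    (hz : ∀ a, z a ≠ 0 → 0 < x a) : ∃ ε > 0, ∀ a, |ε * z a| ≤ x a := by
  have hev : ∀ a, ∀ᶠ ε in 𝓝 (0 : ℝ), |ε * z a| ≤ x a := by
    intro a
    rcases eq_or_ne (z a) 0 with h | h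
    · exact .of_forall fun ε => by simpa [h] using hx a
    · have hcont : Tendsto (fun ε : ℝ => |ε * z a|) (𝓝 0) (𝓝 0) := by
        simpa using ((continuous_id.mul continuous_const).abs).tendsto (0 : ℝ)
      exact hcont.eventually (ge_mem_nhds (hz a h))
  exact (((eventually_all.2 hev).filter_mono nhdsWithin_le_nhds).and
    self_mem_nhdsWithin).exists (f := 𝓝[>] (0 : ℝ)) |>.imp fun ε h => ⟨h.2, h.1⟩

theorem exists_ne_mem_Ioo_of_sum_eq_one {ι : Type*} [Fintype ι] {f : ι → ℝ} (hf : 0 ≤ f)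
    (hsum : ∑ a, f a = 1) {a : ι} (ha : f a ∈ Set.Ioo 0 1) : ∃ b ≠ a, f b ∈ Set.Ioo 0 1 := by
  classical
  have hrest : ∑ b ∈ univ.erase a, f b = 1 - f a := by
    rw [← hsum, ← add_sum_erase _ _ (mem_univ a), add_sub_cancel_left]
  obtain ⟨b, hb, hpos⟩ : ∃ b ∈ univ.erase a, 0 < f b :=
    exists_lt_of_sum_lt (by simpa [hrest] using ha.2)
  refine ⟨b, ne_of_mem_erase hb, hpos, ?_⟩
  linarith [ha.1, single_le_sum (fun c _ => hf c) hb]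

theorem LinearMap.exists_ne_zero_supported_mem_ker {K ι κ : Type*} [Field K] [Fintype ι]
    [Fintype κ] (f : (ι → K) →ₗ[K] κ → K) (E : Finset ι) (B : Finset κ) (hcard : #B < #E)
    (hf : ∀ z : ι → K, (∀ a ∉ E, z a = 0) → ∀ b ∉ B, f z b = 0) :
    ∃ z ≠ 0, (∀ a ∉ E, z a = 0) ∧ f z = 0 := by
  let extend := Function.ExtendByZero.linearMap K (Subtype.val : E → ι)
  let restrict := LinearMap.funLeft K K (Subtype.val : B → κ)
  have hker : LinearMap.ker (restrict ∘ₗ f ∘ₗ extend) ≠ ⊥ :=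
    LinearMap.ker_ne_bot_of_finrank_lt (by simpa using hcard)
  obtain ⟨y, hy, hy0⟩ := (Submodule.ne_bot_iff _).1 hker
  have hsupp : ∀ a ∉ E, extend y a = 0 := fun a ha =>
    Function.extend_apply' _ _ _ fun ⟨b, hb⟩ => ha (hb ▸ b.2)
  refine ⟨extend y, fun h => hy0 ?_, hsupp, funext fun b => ?_⟩
  · exact Function.extend_injective Subtype.val_injective (0 : ι → K)
      (h.trans (map_zero extend).symm)
  · by_cases hb : b ∈ B
    · exact congrFun (LinearMap.mem_ker.1 hy) ⟨b, hb⟩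
    · exact hf _ hsupp b hb

noncomputable def fracMachines {n m : ℕ} (x : Fin n → Fin m → ℝ) (j : Fin n) : Finset (Fin m) :=
  {i | x j i ∈ Set.Ioo 0 1}

namespace PartialLPMS

variable {n m : ℕ} {p : Fin n → Fin m → ℝ} {t : Fin m → ℝ} {T : ℝ} {x : Fin n → Fin m → ℝ}

variable (p) in
noncomputable def constraintMap : (Fin n × Fin m → ℝ) →ₗ[ℝ] Fin n ⊕ Fin m → ℝ :=
  LinearMap.pi <| Sum.elim (fun j => ∑ i, LinearMap.proj (j, i))
    (fun i => ∑ j, p j i • LinearMap.proj (j, i))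

@[simp]
theorem constraintMap_inl (z : Fin n × Fin m → ℝ) (j : Fin n) :
    constraintMap p z (.inl j) = ∑ i, z (j, i) := by
  simp [constraintMap]

@[simp]
theorem constraintMap_inr (z : Fin n × Fin m → ℝ) (i : Fin m) :
    constraintMap p z (.inr i) = ∑ j, p j i * z (j, i) := by
  simp [constraintMap]

theorem add_curry_mem (hx : x ∈ PartialLPMS n m p t T) {z : Fin n × Fin m → ℝ}
    (hz : constraintMap p z = 0) (hzx : ∀ j i, |z (j, i)| ≤ x j i) :
    x + Function.curry z ∈ PartialLPMS n m p t T := by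
  obtain ⟨hnonneg, hzero, hrow, hload⟩ := hx
  refine ⟨fun j i => ?_, fun j i hji => ?_, fun j => ?_, fun i => ?_⟩
  · show 0 ≤ x j i + z (j, i)
    linarith [neg_abs_le (z (j, i)), hzx j i]
  · have hzji := hzx j i
    rw [hzero j i hji, abs_nonpos_iff] at hzji
    simp [hzero j i hji, Function.curry, hzji]
  · simpa [sum_add_distrib, hrow j] using congrFun hz (.inl j)
  · simpa [mul_add, sum_add_distrib] using add_le_add (hload i) (congrFun hz (.inr i)).le

theorem exists_pos (hx : x ∈ PartialLPMS n m p t T) (j : Fin n) : ∃ i, 0 < x j i :=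
  let ⟨i, _, hi⟩ := exists_lt_of_sum_lt (s := univ) (f := 0) (g := x j) (by simp [hx.2.2.1 j])
  ⟨i, hi⟩

theorem card_le_card_image_fst_add_card_image_snd
    (hx : x ∈ (PartialLPMS n m p t T).extremePoints ℝ) (E : Finset (Fin n × Fin m))
    (hE : ∀ e ∈ E, 0 < x e.1 e.2) : #E ≤ #(E.image Prod.fst) + #(E.image Prod.snd) := by
  classical
  by_contra! hcard
  obtain ⟨z, hz0, hzE, hz⟩ := (constraintMap p).exists_ne_zero_supported_mem_ker E
    ((E.image Prod.fst).disjSum (E.image Prod.snd)) (by rwa [card_disjSum]) <| by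
      rintro z hzE (j | i) hb
      · rw [constraintMap_inl]
        exact sum_eq_zero fun i _ => hzE _ fun he =>
          hb (inl_mem_disjSum.2 (mem_image_of_mem Prod.fst he))
      · rw [constraintMap_inr]
        refine sum_eq_zero fun j _ => ?_
        rw [hzE _ fun he => hb (inr_mem_disjSum.2 (mem_image_of_mem Prod.snd he)), mul_zero]
  obtain ⟨ε, hε, hεz⟩ := exists_pos_abs_mul_le (x := fun e => x e.1 e.2) (z := z)
    (fun e => hx.1.1 e.1 e.2) fun e he => hE e (not_imp_comm.1 (hzE e) he)
  have hadd := add_curry_mem hx.1 (z := ε • z) (by simp [hz]) fun j i => hεz (j, i)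
  have hsub := add_curry_mem hx.1 (z := -(ε • z)) (by simp [hz]) fun j i => by
    simpa using hεz (j, i)
  have hcurry := eq_zero_of_add_mem_of_sub_mem_of_mem_extremePoints hx hadd
    (by rw [sub_eq_add_neg]; exact hsub)
  have : ε • z = 0 := Function.curry_injective hcurry
  exact hz0 ((smul_eq_zero.1 this).resolve_left hε.ne')

theorem one_lt_card_fracMachines (hx : x ∈ PartialLPMS n m p t T) {j : Fin n}
    (hj : FracJob x j) : 1 < #(fracMachines x j) := by
  obtain ⟨hnonneg, -, hrow, -⟩ := hx
  obtain ⟨i, hi0, hi1⟩ := hj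
  have hle : x j i ≤ 1 := hrow j ▸ single_le_sum (fun i _ => hnonneg j i) (mem_univ i)
  have hi : x j i ∈ Set.Ioo 0 1 := ⟨(hnonneg j i).lt_of_ne' hi0, hle.lt_of_ne hi1⟩
  obtain ⟨i', hne, hi'⟩ := exists_ne_mem_Ioo_of_sum_eq_one (hnonneg j) (hrow j) hi
  exact one_lt_card.2 ⟨i, by simpa [fracMachines] using hi, i', by simpa [fracMachines] using hi',
    hne.symm⟩

theorem card_le_card_biUnion_fracMachines (hx : x ∈ (PartialLPMS n m p t T).extremePoints ℝ)
    (s : Finset (Fin n)) (hs : ∀ j ∈ s, FracJob x j) : #s ≤ #(s.biUnion (fracMachines x)) := by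
  set E := (s ×ˢ univ).filter fun e : Fin n × Fin m => x e.1 e.2 ∈ Set.Ioo 0 1
  have hE : #E = ∑ j ∈ s, #(fracMachines x j) := by
    rw [card_filter, sum_product]
    exact sum_congr rfl fun j _ => (card_filter _ _).symm
  have htwo : #s • 2 ≤ #E :=
    hE ▸ card_nsmul_le_sum _ _ _ fun j hj => one_lt_card_fracMachines hx.1 (hs j hj)
  have hfst : #(E.image Prod.fst) ≤ #s :=
    card_le_card <| image_subset_iff.2 fun e he => (mem_product.1 (mem_filter.1 he).1).1
  have hsnd : #(E.image Prod.snd) ≤ #(s.biUnion (fracMachines x)) :=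
    card_le_card <| image_subset_iff.2 fun e he => mem_biUnion.2
      ⟨e.1, (mem_product.1 (mem_filter.1 he).1).1, by simpa [fracMachines] using (mem_filter.1 he).2⟩
  have := card_le_card_image_fst_add_card_image_snd hx E fun e he => (mem_filter.1 he).2.1
  rw [smul_eq_mul] at htwo
  omega

end PartialLPMS

open PartialLPMS in
theorem extremePoint_exists_injective_matching_general
    (n m : ℕ) (p : Fin n → Fin m → ℝ)
    (t : Fin m → ℝ) (T : ℝ)
    (x : Fin n → Fin m → ℝ)
    (hx : x ∈ Set.extremePoints ℝ (PartialLPMS n m p t T)) :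
    ∃ σ : Fin n → Fin m,
      Set.InjOn σ {j | FracJob x j} ∧ ∀ j, FracJob x j → 0 < x j (σ j) := by
  have hall : ∀ s : Finset {j | FracJob x j}, #s ≤ #(s.biUnion fun j => fracMachines x j) := by
    intro s
    have := card_le_card_biUnion_fracMachines hx (s.map (Function.Embedding.subtype _))
      fun _ hj => by
        obtain ⟨⟨_, h⟩, -, rfl⟩ := mem_map.1 hj
        exact h
    rwa [card_map, map_eq_image, image_biUnion] at this
  obtain ⟨f, hf_inj, hf_mem⟩ := (all_card_le_biUnion_card_iff_exists_injective _).1 hall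
  choose g _ using exists_pos hx.1
  refine ⟨Function.extend Subtype.val f g, ?_, fun j hj => ?_⟩
  · rwa [Set.injOn_iff_injective, Set.domRestrict_eq, Function.extend_comp Subtype.val_injective]
  · have := hf_mem ⟨j, hj⟩
    rw [← Subtype.val_injective.extend_apply f g ⟨j, hj⟩] at this
    exact (mem_filter.1 this).2.1

/-- For every extreme point `x` of `PARTIAL-LP-MS(P,t,T)` there is an injective map `σ`
from the fractional jobs of `x` to the machines with `x j (σ j) > 0` for every
fractional job `j` (in particular `(j, σ j) ∈ S_T`, since `x` vanishes outside `S_T`). -/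
theorem extremePoint_exists_injective_matching
    (n m : ℕ) (p : Fin n → Fin m → ℝ) (hp : ∀ j i, 0 < p j i)
    (t : Fin m → ℝ) (ht : ∀ i, 0 ≤ t i) (T : ℝ) (hT : 0 ≤ T)
    (x : Fin n → Fin m → ℝ)
    (hx : x ∈ Set.extremePoints ℝ (PartialLPMS n m p t T)) :
    ∃ σ : Fin n → Fin m,
      Set.InjOn σ {j | FracJob x j} ∧ ∀ j, FracJob x j → 0 < x j (σ j) :=
  extremePoint_exists_injective_matching_general n m p t T x hx
end

section
/- In the uniform machine scheduling setting, let T' be the smallest natural number T for which PARTIAL-LP-MS(P,t,T) is nonempty, and let x be a feasible point of PARTIAL-LP-MS(P,t,T'). Then x is an extreme point of PARTIAL-LP-MS(P,t,T') if and only if both of the following hold: (i) the bipartite graph G(x) is a forest (contains no cycle), and (ii) every connected component of G(x) contains at most one machine-node i whose completion time t_i + Σ_{j:(j,i)∈S_{T'}} p_{j,i} x_{j,i} is strictly smaller than T'. -/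
/-- The bipartite graph on jobs ⊕ machines whose edges are the pairs `(j,i)`
satisfying the relation `E`. -/
def bipartiteGraph (n m : ℕ) (E : Fin n → Fin m → Prop) :
    SimpleGraph (Fin n ⊕ Fin m) where
  Adj a b :=
    (∃ j i, a = Sum.inl j ∧ b = Sum.inr i ∧ E j i) ∨
    (∃ j i, a = Sum.inr i ∧ b = Sum.inl j ∧ E j i)
  symm := by
    constructor
    rintro a b (⟨j, i, rfl, rfl, h⟩ | ⟨j, i, rfl, rfl, h⟩)
    · exact Or.inr ⟨j, i, rfl, rfl, h⟩
    · exact Or.inl ⟨j, i, rfl, rfl, h⟩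
  loopless := by
    constructor
    rintro a (⟨j, i, rfl, h, -⟩ | ⟨j, i, rfl, h, -⟩) <;> simp at h

/-- The graph `G(x)` : job `j` and machine `i` are adjacent iff `(j,i) ∈ S_T` and
`0 < x j i < 1`. -/
def fracGraph (n m : ℕ) (p : Fin n → Fin m → ℝ) (T : ℝ)
    (x : Fin n → Fin m → ℝ) : SimpleGraph (Fin n ⊕ Fin m) :=
  bipartiteGraph n m (fun j i => p j i ≤ T ∧ 0 < x j i ∧ x j i < 1)

/-!
A direction `d` with `x ± d` both feasible is supported on the fractional edges of `G(x)`, has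
zero row sums, and does not change the load of a tight machine; conversely, any nonzero `d` with
these properties (the loads of slack machines may change) gives feasible points `x ± ε d`.

Along a cycle of `G(x)`, or along a path joining two slack machines, the net flow on each edge
divided by `pj j` is such a direction, since the load of machine `i` is `∑ j, (pj j / s i) x j i`.
Conversely, if `G(x)` is a forest, the support of a nonzero direction is a nonempty forest, so
one of its components has two distinct leaves; a leaf can be neither a job (zero row sums) nor a
tight machine (unchanged load), so one component of `G(x)` holds two slack machines.
-/

namespace SimpleGraph

variable {V : Type*} {G : SimpleGraph V}

theorem IsAcyclic.exists_ne_reachable_existsUnique_adj [Finite V] (hG : G.IsAcyclic) {a b : V}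
    (hab : G.Adj a b) :
    ∃ u v, u ≠ v ∧ G.Reachable u v ∧ (∃! w, G.Adj u w) ∧ ∃! w, G.Adj v w := by
  have := Fintype.ofFinite V
  have : Nonempty V := ⟨a⟩
  obtain ⟨u, v, p, hp, hmax⟩ := Walk.exists_isPath_forall_isPath_length_le_length G
  have hnil : ¬p.Nil := by
    rw [← Walk.length_eq_zero_iff]
    have := hmax a b hab.toWalk (by simp [hab.ne])
    simp only [Walk.length_cons, Walk.length_nil] at this
    omega
  refine ⟨u, v, hp.nil_iff_eq.not.mp hnil, p.reachable, ?_, ?_⟩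
  · refine ⟨_, p.adj_snd hnil, fun w hadj ↦ ?_⟩
    apply hG.eq_snd_of_adj_start hp hadj
    have : ¬(p.cons hadj.symm).IsPath := by grind [Walk.length_cons]
    grind [Walk.IsPath.cons]
  · refine ⟨_, p.adj_penultimate hnil |>.symm, fun w hadj ↦ ?_⟩
    apply hG.eq_penultimate_of_adj_end hp hadj
    have : ¬(p.concat hadj).IsPath := by grind [Walk.length_concat]
    grind [Walk.IsPath.concat]

namespace Walk

variable [DecidableEq V]

def flow : ∀ {u v : V}, G.Walk u v → V → V → ℤ
  | _, _, nil => 0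
  | _, _, @cons _ _ u v _ _ p => fun a b =>
      ((if a = u ∧ b = v then 1 else 0) - (if a = v ∧ b = u then 1 else 0)) + p.flow a b

@[simp] theorem flow_nil {u : V} : (nil : G.Walk u u).flow = 0 := rfl

@[simp] theorem flow_cons {u v w : V} (h : G.Adj u v) (p : G.Walk v w) (a b : V) :
    (cons h p).flow a b =
      ((if a = u ∧ b = v then 1 else 0) - (if a = v ∧ b = u then 1 else 0)) + p.flow a b := rfl

theorem flow_swap {u v : V} (w : G.Walk u v) (a b : V) : w.flow b a = -w.flow a b := by
  induction w with
  | nil => simp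
  | cons h p ih => simp only [flow_cons, ih]; split_ifs <;> grind

theorem sum_flow [Fintype V] {u v : V} (w : G.Walk u v) (a : V) :
    ∑ b, w.flow a b = (if a = u then 1 else 0) - (if a = v then 1 else 0) := by
  induction w with
  | nil => simp
  | cons h p ih =>
    simp only [flow_cons, Finset.sum_add_distrib, Finset.sum_sub_distrib, ih, ite_and]
    simp only [Finset.sum_ite_irrel, Finset.sum_ite_eq', Finset.mem_univ, if_true,
      Finset.sum_const_zero]
    ring

theorem flow_eq_zero_of_notMem_edges {u v a b : V} {w : G.Walk u v} (h : s(a, b) ∉ w.edges) :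
    w.flow a b = 0 := by
  induction w with
  | nil => rfl
  | cons h' p ih =>
    simp only [edges_cons, List.mem_cons, not_or, Sym2.eq_iff] at h
    simp only [flow_cons, ih h.2]
    grind

theorem adj_of_flow_ne_zero {u v a b : V} {w : G.Walk u v} (h : w.flow a b ≠ 0) : G.Adj a b :=
  w.adj_of_mem_edges (not_imp_comm.mp flow_eq_zero_of_notMem_edges h)

theorem IsTrail.exists_flow_ne_zero {u v : V} {w : G.Walk u v} (hw : w.IsTrail)
    (hnil : ¬w.Nil) : ∃ a b, w.flow a b ≠ 0 := by
  cases w with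
  | nil => exact absurd Walk.Nil.nil hnil
  | @cons _ v' _ h p =>
    refine ⟨u, v', ?_⟩
    rw [isTrail_cons] at hw
    simp [flow_eq_zero_of_notMem_edges hw.2, h.ne]

end Walk

end SimpleGraph

theorem Convex.mem_extremePoints_iff_forall_add_mem_sub_mem {𝕜 E : Type*} [Field 𝕜]
    [LinearOrder 𝕜] [IsStrictOrderedRing 𝕜] [AddCommGroup E] [Module 𝕜 E] {A : Set E} {x : E}
    (hA : Convex 𝕜 A) :
    x ∈ A.extremePoints 𝕜 ↔ x ∈ A ∧ ∀ d, x + d ∈ A → x - d ∈ A → d = 0 := by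
  rw [mem_extremePoints_iff_left]
  refine and_congr_right fun hxA ↦ ⟨fun h d hadd hsub ↦ ?_, fun h x₁ h₁ x₂ h₂ hx ↦ ?_⟩
  · have hmid : x ∈ openSegment 𝕜 (x + d) (x - d) :=
      ⟨1 / 2, 1 / 2, by norm_num, by norm_num, by norm_num, by module⟩
    simpa using h _ hadd _ hsub hmid
  · obtain ⟨a, b, ha, hb, hab, rfl⟩ := hx
    obtain rfl : a = 1 - b := by linarith
    set c := min (1 - b) b
    have hc : 0 < c := lt_min ha hb
    have h₁' : x₁ - ((1 - b) • x₁ + b • x₂) = b • (x₁ - x₂) := by module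
    have h₂' : x₂ - ((1 - b) • x₁ + b • x₂) = (1 - b) • -(x₁ - x₂) := by module
    have hd : c • (x₁ - x₂) = 0 := by
      refine h _ ?_ ?_
      · have := hA.add_smul_sub_mem hxA h₁
          ⟨div_nonneg hc.le hb.le, div_le_one_of_le₀ (min_le_right _ _) hb.le⟩
        rwa [h₁', smul_smul, div_mul_cancel₀ _ hb.ne'] at this
      · have := hA.add_smul_sub_mem hxA h₂
          ⟨div_nonneg hc.le ha.le, div_le_one_of_le₀ (min_le_left _ _) ha.le⟩
        rwa [h₂', smul_smul, div_mul_cancel₀ _ ha.ne', smul_neg, ← sub_eq_add_neg] at this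
    rw [smul_eq_zero_iff_right hc.ne', sub_eq_zero] at hd
    subst hd
    module

theorem Fintype.sum_ne_zero_of_existsUnique_ne_zero {ι M : Type*} [Fintype ι] [AddCommMonoid M]
    {f : ι → M} (h : ∃! i, f i ≠ 0) : ∑ i, f i ≠ 0 := by
  obtain ⟨i, hi, huniq⟩ := h
  rwa [Fintype.sum_eq_single i fun k hk ↦ not_not.1 (mt (huniq k) hk)]

open SimpleGraph Sum Filter Topology


section Bipartite

variable {n m : ℕ} {E : Fin n → Fin m → Prop}

@[simp] theorem bipartiteGraph_adj_inl_inr {j : Fin n} {i : Fin m} :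
    (bipartiteGraph n m E).Adj (inl j) (inr i) ↔ E j i := by
  simp [bipartiteGraph]

@[simp] theorem bipartiteGraph_adj_inr_inl {j : Fin n} {i : Fin m} :
    (bipartiteGraph n m E).Adj (inr i) (inl j) ↔ E j i := by
  simp [bipartiteGraph]

@[simp] theorem bipartiteGraph_not_adj_inl_inl {j j' : Fin n} :
    ¬(bipartiteGraph n m E).Adj (inl j) (inl j') := by
  simp [bipartiteGraph]

@[simp] theorem bipartiteGraph_not_adj_inr_inr {i i' : Fin m} :
    ¬(bipartiteGraph n m E).Adj (inr i) (inr i') := by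
  simp [bipartiteGraph]

theorem bipartiteGraph_existsUnique_adj_inl {j : Fin n} :
    (∃! w, (bipartiteGraph n m E).Adj (inl j) w) ↔ ∃! i, E j i := by
  constructor
  · rintro ⟨(j' | i), hi, huniq⟩
    · simp at hi
    · exact ⟨i, by simpa using hi, fun i' h ↦ inr_injective (huniq _ (by simpa using h))⟩
  · rintro ⟨i, hi, huniq⟩
    refine ⟨inr i, by simpa using hi, ?_⟩
    rintro (j' | i') h
    · simp at h
    · exact congrArg inr (huniq i' (by simpa using h))

theorem bipartiteGraph_existsUnique_adj_inr {i : Fin m} :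
    (∃! w, (bipartiteGraph n m E).Adj (inr i) w) ↔ ∃! j, E j i := by
  constructor
  · rintro ⟨(j | i'), hj, huniq⟩
    · exact ⟨j, by simpa using hj, fun j' h ↦ inl_injective (huniq _ (by simpa using h))⟩
    · simp at hj
  · rintro ⟨j, hj, huniq⟩
    refine ⟨inl j, by simpa using hj, ?_⟩
    rintro (j' | i') h
    · exact congrArg inl (huniq j' (by simpa using h))
    · simp at h

namespace SimpleGraph.Walk

variable {a b : Fin n ⊕ Fin m} (w : (bipartiteGraph n m E).Walk a b)

@[simp] theorem flow_inl_inl (j j' : Fin n) : w.flow (inl j) (inl j') = 0 :=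
  flow_eq_zero_of_notMem_edges fun h ↦ by simpa using w.adj_of_mem_edges h

@[simp] theorem flow_inr_inr (i i' : Fin m) : w.flow (inr i) (inr i') = 0 :=
  flow_eq_zero_of_notMem_edges fun h ↦ by simpa using w.adj_of_mem_edges h

theorem sum_flow_from_inl (j : Fin n) :
    ∑ i, w.flow (inl j) (inr i) =
      (if inl j = a then 1 else 0) - (if inl j = b then 1 else 0) := by
  simpa [Fintype.sum_sum_type] using w.sum_flow (inl j)

theorem sum_flow_into_inr (i : Fin m) :
    ∑ j, w.flow (inl j) (inr i) =
      (if inr i = b then 1 else 0) - (if inr i = a then 1 else 0) := by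
  have h := w.sum_flow (inr i)
  simp only [Fintype.sum_sum_type, flow_inr_inr, Finset.sum_const_zero, add_zero,
    fun j ↦ w.flow_swap (inl j) (inr i), Finset.sum_neg_distrib] at h
  linarith

theorem rel_of_flow_inl_inr_ne_zero {j : Fin n} {i : Fin m} (h : w.flow (inl j) (inr i) ≠ 0) :
    E j i := by
  simpa using adj_of_flow_ne_zero h

theorem IsTrail.exists_flow_inl_inr_ne_zero {w : (bipartiteGraph n m E).Walk a b}
    (hw : w.IsTrail) (hnil : ¬w.Nil) : ∃ j i, w.flow (inl j) (inr i) ≠ 0 := by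
  obtain ⟨(j | i), (j' | i'), h⟩ := hw.exists_flow_ne_zero hnil
  · simpa using adj_of_flow_ne_zero h
  · exact ⟨j, i', h⟩
  · exact ⟨j', i, by rwa [w.flow_swap, neg_ne_zero] at h⟩
  · simpa using adj_of_flow_ne_zero h

end SimpleGraph.Walk

end Bipartite

section PartialLPMS

variable {n m : ℕ} {p : Fin n → Fin m → ℝ} {t : Fin m → ℝ} {T : ℝ}
  {x d : Fin n → Fin m → ℝ}

theorem convex_partialLPMS : Convex ℝ (PartialLPMS n m p t T) := by
  rintro y ⟨hy0, hyS, hyrow, hycol⟩ z ⟨hz0, hzS, hzrow, hzcol⟩ a b ha hb hab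
  refine ⟨fun j i ↦ ?_, fun j i hji ↦ ?_, fun j ↦ ?_, fun i ↦ ?_⟩
  · simp only [Pi.add_apply, Pi.smul_apply, smul_eq_mul]
    exact add_nonneg (mul_nonneg ha (hy0 j i)) (mul_nonneg hb (hz0 j i))
  · simp [hyS j i hji, hzS j i hji]
  · simp [Finset.sum_add_distrib, ← Finset.mul_sum, hyrow, hzrow, hab]
  · have hy := mul_le_mul_of_nonneg_left (hycol i) ha
    have hz := mul_le_mul_of_nonneg_left (hzcol i) hb
    simp only [Pi.add_apply, Pi.smul_apply, smul_eq_mul, mul_add, Finset.sum_add_distrib,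
      mul_left_comm _ a, mul_left_comm _ b, ← Finset.mul_sum]
    linear_combination hy + hz + (T - t i) * hab

theorem le_one_of_mem_partialLPMS (hx : x ∈ PartialLPMS n m p t T) (j : Fin n) (i : Fin m) :
    x j i ≤ 1 :=
  hx.2.2.1 j ▸ Finset.single_le_sum (fun i _ ↦ hx.1 j i) (Finset.mem_univ i)

theorem eventually_add_smul_mem_partialLPMS (hx : x ∈ PartialLPMS n m p t T)
    (hsupp : ∀ j i, d j i ≠ 0 → p j i ≤ T ∧ 0 < x j i) (hrow : ∀ j, ∑ i, d j i = 0)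
    (hcol : ∀ i, ∑ j, p j i * d j i ≠ 0 → ∑ j, p j i * x j i < T - t i) :
    ∀ᶠ ε in 𝓝 (0 : ℝ), x + ε • d ∈ PartialLPMS n m p t T := by
  obtain ⟨hx0, hxS, hxrow, hxcol⟩ := hx
  have hload (ε : ℝ) (i : Fin m) :
      ∑ j, p j i * (x + ε • d) j i = ∑ j, p j i * x j i + ε * ∑ j, p j i * d j i := by
    simp only [Pi.add_apply, Pi.smul_apply, smul_eq_mul, mul_add, Finset.sum_add_distrib,
      Finset.mul_sum, mul_left_comm ε]
  have hnonneg (j : Fin n) (i : Fin m) : ∀ᶠ ε in 𝓝 (0 : ℝ), 0 ≤ x j i + ε * d j i := by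
    by_cases hd : d j i = 0
    · simp [hd, hx0 j i]
    · refine (Tendsto.eventually_const_lt (hsupp j i hd).2 ?_).mono fun _ ↦ le_of_lt
      exact Continuous.tendsto' (by fun_prop) _ _ (by simp)
  have hcap (i : Fin m) : ∀ᶠ ε in 𝓝 (0 : ℝ), ∑ j, p j i * (x + ε • d) j i ≤ T - t i := by
    simp only [hload]
    by_cases hd : ∑ j, p j i * d j i = 0
    · simp [hd, hxcol i]
    · refine (Tendsto.eventually_lt_const (hcol i hd) ?_).mono fun _ ↦ le_of_lt
      exact Continuous.tendsto' (by fun_prop) _ _ (by simp)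
  filter_upwards [eventually_all.2 fun j ↦ eventually_all.2 (hnonneg j),
    eventually_all.2 hcap] with ε h0 hcap
  refine ⟨h0, fun j i hji ↦ ?_, fun j ↦ ?_, hcap⟩
  · have hd : d j i = 0 := by_contra fun hd ↦ (hsupp j i hd).1.not_gt hji
    simp [hd, hxS j i hji]
  · simp [Finset.sum_add_distrib, ← Finset.mul_sum, hxrow, hrow]

theorem notMem_extremePoints_partialLPMS_of_ne_zero (hx : x ∈ PartialLPMS n m p t T)
    (hsupp : ∀ j i, d j i ≠ 0 → p j i ≤ T ∧ 0 < x j i) (hrow : ∀ j, ∑ i, d j i = 0)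
    (hcol : ∀ i, ∑ j, p j i * d j i ≠ 0 → ∑ j, p j i * x j i < T - t i) (hd : d ≠ 0) :
    x ∉ (PartialLPMS n m p t T).extremePoints ℝ := by
  intro hext
  have hneg := eventually_add_smul_mem_partialLPMS (d := -d) hx (by simpa using hsupp)
    (by simpa using hrow) (by simpa using hcol)
  obtain ⟨ε, hε, hadd, hsub⟩ :=
    ((eventually_add_smul_mem_partialLPMS hx hsupp hrow hcol).and hneg).exists_gt
  rw [smul_neg, ← sub_eq_add_neg] at hsub
  have := (convex_partialLPMS.mem_extremePoints_iff_forall_add_mem_sub_mem.1 hext).2 _ hadd hsub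
  exact hd ((smul_eq_zero_iff_right hε.ne').1 this)

theorem fractional_of_add_mem_of_sub_mem (hadd : x + d ∈ PartialLPMS n m p t T)
    (hsub : x - d ∈ PartialLPMS n m p t T) {j : Fin n} {i : Fin m} (hd : d j i ≠ 0) :
    p j i ≤ T ∧ 0 < x j i ∧ x j i < 1 := by
  have h₀ : 0 ≤ x j i + d j i := hadd.1 j i
  have h₁ : 0 ≤ x j i - d j i := hsub.1 j i
  have h₂ : x j i + d j i ≤ 1 := le_one_of_mem_partialLPMS hadd j i
  have h₃ : x j i - d j i ≤ 1 := le_one_of_mem_partialLPMS hsub j i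
  refine ⟨not_lt.1 fun hT ↦ hd ?_, ?_, ?_⟩
  · have h₄ : x j i + d j i = 0 := hadd.2.1 j i hT
    have h₅ : x j i - d j i = 0 := hsub.2.1 j i hT
    linarith
  all_goals cases hd.lt_or_gt <;> linarith

theorem sum_eq_zero_of_add_mem_of_sub_mem (hadd : x + d ∈ PartialLPMS n m p t T)
    (hsub : x - d ∈ PartialLPMS n m p t T) (j : Fin n) : ∑ i, d j i = 0 := by
  have h₁ : ∑ i, (x j i + d j i) = 1 := hadd.2.2.1 j
  have h₂ : ∑ i, (x j i - d j i) = 1 := hsub.2.2.1 j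
  rw [Finset.sum_add_distrib] at h₁
  rw [Finset.sum_sub_distrib] at h₂
  linarith

theorem load_eq_zero_of_add_mem_of_sub_mem (hadd : x + d ∈ PartialLPMS n m p t T)
    (hsub : x - d ∈ PartialLPMS n m p t T) {i : Fin m}
    (htight : ∑ j, p j i * x j i = T - t i) : ∑ j, p j i * d j i = 0 := by
  have h₁ : ∑ j, p j i * (x j i + d j i) ≤ T - t i := hadd.2.2.2 i
  have h₂ : ∑ j, p j i * (x j i - d j i) ≤ T - t i := hsub.2.2.2 i
  simp only [mul_add, mul_sub, Finset.sum_add_distrib, Finset.sum_sub_distrib] at h₁ h₂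
  linarith

end PartialLPMS

section Uniform

variable {n m : ℕ} {pj : Fin n → ℝ} {s : Fin m → ℝ} {t : Fin m → ℝ} {T : ℝ}
  {x : Fin n → Fin m → ℝ}

theorem notMem_extremePoints_of_isTrail (hpj : ∀ j, 0 < pj j)
    (hx : x ∈ PartialLPMS n m (fun j i ↦ pj j / s i) t T) {a b : Fin n ⊕ Fin m}
    (w : (fracGraph n m (fun j i ↦ pj j / s i) T x).Walk a b) (hw : w.IsTrail) (hnil : ¬w.Nil)
    (hends : a = b ∨ ∃ i₁ i₂, a = inr i₁ ∧ b = inr i₂ ∧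
      t i₁ + ∑ j, pj j / s i₁ * x j i₁ < T ∧ t i₂ + ∑ j, pj j / s i₂ * x j i₂ < T) :
    x ∉ (PartialLPMS n m (fun j i ↦ pj j / s i) t T).extremePoints ℝ := by
  change (bipartiteGraph n m _).Walk a b at w
  set d : Fin n → Fin m → ℝ := fun j i ↦ w.flow (inl j) (inr i) / pj j
  have hload (i : Fin m) :
      ∑ j, pj j / s i * d j i = (∑ j, w.flow (inl j) (inr i) : ℤ) / s i := by
    push_cast
    rw [Finset.sum_div]
    refine Finset.sum_congr rfl fun j _ ↦ ?_
    simp only [d]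
    field_simp [(hpj j).ne']
  refine notMem_extremePoints_partialLPMS_of_ne_zero hx (d := d) (fun j i hd ↦ ?_) (fun j ↦ ?_)
    (fun i hi ↦ ?_) ?_
  · have : w.flow (inl j) (inr i) ≠ 0 := fun h ↦ hd (by simp [d, h])
    obtain ⟨hT, hpos, -⟩ := w.rel_of_flow_inl_inr_ne_zero this
    exact ⟨hT, hpos⟩
  · simp only [d, ← Finset.sum_div]
    rw [← Int.cast_sum, w.sum_flow_from_inl]
    rcases hends with rfl | ⟨i₁, i₂, rfl, rfl, -⟩ <;> simp
  · rw [hload, w.sum_flow_into_inr] at hi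
    rcases hends with rfl | ⟨i₁, i₂, rfl, rfl, h₁, h₂⟩
    · simp at hi
    by_cases hi₁ : i = i₁
    · subst hi₁; linarith
    by_cases hi₂ : i = i₂
    · subst hi₂; linarith
    simp [hi₁, hi₂] at hi
  · obtain ⟨j, i, h⟩ := hw.exists_flow_inl_inr_ne_zero hnil
    exact fun hd ↦ h (by simpa [d, (hpj j).ne'] using congrFun (congrFun hd j) i)

theorem mem_extremePoints_of_isAcyclic (hpj : ∀ j, 0 < pj j) (hs : ∀ i, 0 < s i)
    (hx : x ∈ PartialLPMS n m (fun j i ↦ pj j / s i) t T)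
    (hac : (fracGraph n m (fun j i ↦ pj j / s i) T x).IsAcyclic)
    (huniq : ∀ i₁ i₂,
      (fracGraph n m (fun j i ↦ pj j / s i) T x).Reachable (inr i₁) (inr i₂) →
      t i₁ + ∑ j, pj j / s i₁ * x j i₁ < T → t i₂ + ∑ j, pj j / s i₂ * x j i₂ < T → i₁ = i₂) :
    x ∈ (PartialLPMS n m (fun j i ↦ pj j / s i) t T).extremePoints ℝ := by
  rw [convex_partialLPMS.mem_extremePoints_iff_forall_add_mem_sub_mem]
  refine ⟨hx, fun d hadd hsub ↦ ?_⟩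
  by_contra hd
  obtain ⟨j, i, hji⟩ : ∃ j i, d j i ≠ 0 := by simpa [funext_iff] using hd
  set H := bipartiteGraph n m fun j i ↦ d j i ≠ 0
  have hHG : H ≤ fracGraph n m (fun j i ↦ pj j / s i) T x := by
    rintro (j | i) (j' | i') h <;>
      simp only [H, fracGraph, bipartiteGraph_adj_inl_inr, bipartiteGraph_adj_inr_inl,
        bipartiteGraph_not_adj_inl_inl, bipartiteGraph_not_adj_inr_inr] at h ⊢ <;>
      exact fractional_of_add_mem_of_sub_mem hadd hsub h
  have hleaf : ∀ v, (∃! w, H.Adj v w) →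
      ∃ i, v = inr i ∧ t i + ∑ j, pj j / s i * x j i < T := by
    rintro (j | i) hv
    · rw [bipartiteGraph_existsUnique_adj_inl] at hv
      exact absurd (sum_eq_zero_of_add_mem_of_sub_mem hadd hsub j)
        (Fintype.sum_ne_zero_of_existsUnique_ne_zero hv)
    · refine ⟨i, rfl, not_le.1 fun htight ↦ ?_⟩
      rw [bipartiteGraph_existsUnique_adj_inr] at hv
      refine Fintype.sum_ne_zero_of_existsUnique_ne_zero (f := fun j ↦ pj j / s i * d j i) ?_
        (load_eq_zero_of_add_mem_of_sub_mem hadd hsub (le_antisymm (hx.2.2.2 i) (by linarith)))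
      simpa [(hpj _).ne', (hs i).ne'] using hv
  have hji' : H.Adj (inl j) (inr i) := by simpa [H]
  obtain ⟨u, v, huv, hreach, hu, hv⟩ := (hac.anti hHG).exists_ne_reachable_existsUnique_adj hji'
  obtain ⟨i₁, rfl, h₁⟩ := hleaf u hu
  obtain ⟨i₂, rfl, h₂⟩ := hleaf v hv
  exact huv (congrArg inr (huniq i₁ i₂ (hreach.mono hHG) h₁ h₂))

end Uniform

theorem extremePoint_iff_forest_and_unique_slack_machine_general
    (n m : ℕ) (pj : Fin n → ℝ) (hpj : ∀ j, 0 < pj j)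
    (s : Fin m → ℝ) (hs : ∀ i, 0 < s i)
    (t : Fin m → ℕ) (T' : ℕ)
    (x : Fin n → Fin m → ℝ)
    (hx : x ∈ PartialLPMS n m (fun j i => pj j / s i) (fun i => (t i : ℝ)) (T' : ℝ)) :
    x ∈ Set.extremePoints ℝ
        (PartialLPMS n m (fun j i => pj j / s i) (fun i => (t i : ℝ)) (T' : ℝ)) ↔
      ((fracGraph n m (fun j i => pj j / s i) (T' : ℝ) x).IsAcyclic ∧
       ∀ i₁ i₂ : Fin m,
         (fracGraph n m (fun j i => pj j / s i) (T' : ℝ) x).connectedComponentMk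
             (Sum.inr i₁) =
           (fracGraph n m (fun j i => pj j / s i) (T' : ℝ) x).connectedComponentMk
             (Sum.inr i₂) →
         (t i₁ : ℝ) + ∑ j, (pj j / s i₁) * x j i₁ < (T' : ℝ) →
         (t i₂ : ℝ) + ∑ j, (pj j / s i₂) * x j i₂ < (T' : ℝ) →
         i₁ = i₂) := by
  refine ⟨fun hext ↦ ⟨fun v c hc ↦ ?_, fun i₁ i₂ hcomp h₁ h₂ ↦ ?_⟩, fun ⟨hac, huniq⟩ ↦ ?_⟩
  · exact notMem_extremePoints_of_isTrail hpj hx c hc.isTrail hc.not_nil (.inl rfl) hext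
  · by_contra hne
    obtain ⟨w⟩ := ConnectedComponent.exact hcomp
    exact notMem_extremePoints_of_isTrail hpj hx w.bypass w.bypass_isPath.isTrail
      (Walk.not_nil_of_ne (by simpa using hne)) (.inr ⟨i₁, i₂, rfl, rfl, h₁, h₂⟩) hext
  · exact mem_extremePoints_of_isAcyclic hpj hs hx hac
      fun i₁ i₂ h ↦ huniq i₁ i₂ (ConnectedComponent.eq.2 h)

/-- In the uniform machine scheduling setting (`p j i = pj j / s i`), a feasible
point `x` of `PARTIAL-LP-MS(P,t,T')` — where `T'` is the smallest natural `T` making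
the polyhedron nonempty — is an extreme point iff `G(x)` is a forest and every
connected component of `G(x)` contains at most one machine-node whose completion
time is strictly smaller than `T'`. -/
theorem extremePoint_iff_forest_and_unique_slack_machine
    (n m : ℕ) (pj : Fin n → ℝ) (hpj : ∀ j, 0 < pj j)
    (s : Fin m → ℝ) (hs : ∀ i, 0 < s i)
    (t : Fin m → ℕ) (T' : ℕ)
    (hT' : IsLeast {T : ℕ |
      (PartialLPMS n m (fun j i => pj j / s i) (fun i => (t i : ℝ)) (T : ℝ)).Nonempty} T')
    (x : Fin n → Fin m → ℝ)
    (hx : x ∈ PartialLPMS n m (fun j i => pj j / s i) (fun i => (t i : ℝ)) (T' : ℝ)) :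
    x ∈ Set.extremePoints ℝ
        (PartialLPMS n m (fun j i => pj j / s i) (fun i => (t i : ℝ)) (T' : ℝ)) ↔
      ((fracGraph n m (fun j i => pj j / s i) (T' : ℝ) x).IsAcyclic ∧
       ∀ i₁ i₂ : Fin m,
         (fracGraph n m (fun j i => pj j / s i) (T' : ℝ) x).connectedComponentMk
             (Sum.inr i₁) =
           (fracGraph n m (fun j i => pj j / s i) (T' : ℝ) x).connectedComponentMk
             (Sum.inr i₂) →
         (t i₁ : ℝ) + ∑ j, (pj j / s i₁) * x j i₁ < (T' : ℝ) →
         (t i₂ : ℝ) + ∑ j, (pj j / s i₂) * x j i₂ < (T' : ℝ) →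
         i₁ = i₂) :=
  extremePoint_iff_forest_and_unique_slack_machine_general n m pj hpj s hs t T' x hx
end

section
/- The optimal value of the multi-knapsack LP relaxation with capacities C_1,…,C_m equals the optimal value of the single-knapsack LP relaxation in which the m knapsacks are merged into one knapsack of capacity C_1 + … + C_m; that is, OPT_LP(C,w,p) = max { Σ_j p_j y_j : 0 ≤ y_j ≤ 1 for all j, Σ_j w_j y_j ≤ Σ_{i=1}^m C_i }. -/
/-!
Aggregating a multi-knapsack solution item by item, `y j = ∑ i, x j i`, gives a solution of the
merged knapsack of the same profit. Conversely a merged solution `y` is split among the knapsacks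
in proportion to their capacities, `x j i = y j * (C i / ∑ C)`; when the total capacity vanishes,
positivity of the weights forces `y = 0`, and the same formula still works because `_ / 0 = 0`.
-/

open Finset

variable {ι κ : Type*} [Fintype ι] [Fintype κ]

def IsMultiKnapsackFeasible (w : ι → ℝ) (C : κ → ℝ) (x : ι → κ → ℝ) : Prop :=
  (∀ j i, 0 ≤ x j i) ∧ (∀ i, ∑ j, w j * x j i ≤ C i) ∧ (∀ j, ∑ i, x j i ≤ 1)

def IsKnapsackFeasible (w : ι → ℝ) (c : ℝ) (y : ι → ℝ) : Prop :=
  (∀ j, 0 ≤ y j ∧ y j ≤ 1) ∧ ∑ j, w j * y j ≤ c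

def multiKnapsackValues (w p : ι → ℝ) (C : κ → ℝ) : Set ℝ :=
  {v | ∃ x, IsMultiKnapsackFeasible w C x ∧ ∑ j, ∑ i, p j * x j i = v}

def knapsackValues (w p : ι → ℝ) (c : ℝ) : Set ℝ :=
  {v | ∃ y, IsKnapsackFeasible w c y ∧ ∑ j, p j * y j = v}

theorem IsMultiKnapsackFeasible.isKnapsackFeasible_sum {w : ι → ℝ} {C : κ → ℝ}
    {x : ι → κ → ℝ} (hx : IsMultiKnapsackFeasible w C x) :
    IsKnapsackFeasible w (∑ i, C i) fun j ↦ ∑ i, x j i := by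
  obtain ⟨hx_nonneg, hx_cap, hx_item⟩ := hx
  refine ⟨fun j ↦ ⟨sum_nonneg fun i _ ↦ hx_nonneg j i, hx_item j⟩, ?_⟩
  calc ∑ j, w j * ∑ i, x j i = ∑ i, ∑ j, w j * x j i := by simp_rw [mul_sum]; exact sum_comm
    _ ≤ ∑ i, C i := sum_le_sum fun i _ ↦ hx_cap i

theorem IsKnapsackFeasible.eq_zero_of_nonpos {w : ι → ℝ} (hw : ∀ j, 0 < w j) {c : ℝ}
    {y : ι → ℝ} (hy : IsKnapsackFeasible w c y) (hc : c ≤ 0) : y = 0 := by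
  have hterm : ∀ j ∈ univ, 0 ≤ w j * y j := fun j _ ↦ mul_nonneg (hw j).le (hy.1 j).1
  have hsum : ∑ j, w j * y j = 0 := le_antisymm (hy.2.trans hc) (sum_nonneg hterm)
  funext j
  exact (mul_eq_zero.1 ((sum_eq_zero_iff_of_nonneg hterm).1 hsum j (mem_univ j))).resolve_left
    (hw j).ne'

theorem IsKnapsackFeasible.isMultiKnapsackFeasible_proportional {w : ι → ℝ} {C : κ → ℝ}
    (hC : ∀ i, 0 ≤ C i) {y : ι → ℝ} (hy : IsKnapsackFeasible w (∑ i, C i) y) :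
    IsMultiKnapsackFeasible w C fun j i ↦ y j * (C i / ∑ i, C i) := by
  set S := ∑ i, C i
  have hS : 0 ≤ S := sum_nonneg fun i _ ↦ hC i
  refine ⟨fun j i ↦ mul_nonneg (hy.1 j).1 (div_nonneg (hC i) hS), fun i ↦ ?_, fun j ↦ ?_⟩
  · calc ∑ j, w j * (y j * (C i / S)) = (∑ j, w j * y j) / S * C i := by
          rw [div_mul_eq_mul_div, sum_mul, sum_div]
          exact sum_congr rfl fun j _ ↦ by ring
      _ ≤ 1 * C i := mul_le_mul_of_nonneg_right (div_le_one_of_le₀ hy.2 hS) (hC i)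
      _ = C i := one_mul _
  · calc ∑ i, y j * (C i / S) = y j * (S / S) := by rw [← mul_sum, ← sum_div]
      _ ≤ y j * 1 := mul_le_mul_of_nonneg_left (div_self_le_one S) (hy.1 j).1
      _ = y j := mul_one _
      _ ≤ 1 := (hy.1 j).2

theorem multiKnapsackValues_eq_knapsackValues_sum {w : ι → ℝ} (hw : ∀ j, 0 < w j)
    (p : ι → ℝ) {C : κ → ℝ} (hC : ∀ i, 0 ≤ C i) :
    multiKnapsackValues w p C = knapsackValues w p (∑ i, C i) := by
  ext v
  constructor
  · rintro ⟨x, hx, rfl⟩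
    exact ⟨_, hx.isKnapsackFeasible_sum, by simp_rw [mul_sum]⟩
  · rintro ⟨y, hy, rfl⟩
    refine ⟨_, hy.isMultiKnapsackFeasible_proportional hC, ?_⟩
    simp_rw [← mul_sum, ← sum_div]
    rcases (sum_nonneg fun i _ ↦ hC i : 0 ≤ ∑ i, C i).eq_or_lt with hS | hS
    · simp [hy.eq_zero_of_nonpos hw hS.ge]
    · simp [div_self hS.ne']

theorem multiKnapsack_lp_eq_surrogate_lp_general
    (n m : ℕ)
    (w : Fin n → ℝ) (hw : ∀ j, 0 < w j)
    (p : Fin n → ℝ)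
    (C : Fin m → ℝ) (hC : ∀ i, 0 ≤ C i)
    (OPTmulti OPTsingle : ℝ)
    (hmulti : IsGreatest {v : ℝ | ∃ x : Fin n → Fin m → ℝ,
      ((∀ j i, 0 ≤ x j i) ∧
       (∀ i, ∑ j, w j * x j i ≤ C i) ∧
       (∀ j, ∑ i, x j i ≤ 1)) ∧
      ∑ j, ∑ i, p j * x j i = v} OPTmulti)
    (hsingle : IsGreatest {v : ℝ | ∃ y : Fin n → ℝ,
      ((∀ j, 0 ≤ y j ∧ y j ≤ 1) ∧
       ∑ j, w j * y j ≤ ∑ i, C i) ∧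
      ∑ j, p j * y j = v} OPTsingle) :
    OPTmulti = OPTsingle := by
  change IsGreatest (multiKnapsackValues w p C) OPTmulti at hmulti
  change IsGreatest (knapsackValues w p (∑ i, C i)) OPTsingle at hsingle
  rw [multiKnapsackValues_eq_knapsackValues_sum hw p hC] at hmulti
  exact hmulti.unique hsingle

/-- The optimal value of the multi-knapsack LP relaxation equals the optimal value of
the single-knapsack LP relaxation with the merged capacity `C 1 + … + C m`. -/
theorem multiKnapsack_lp_eq_surrogate_lp
    (n m : ℕ)
    (w : Fin n → ℝ) (hw : ∀ j, 0 < w j)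
    (p : Fin n → ℝ) (hp : ∀ j, 0 ≤ p j)
    (C : Fin m → ℝ) (hC : ∀ i, 0 ≤ C i)
    (OPTmulti OPTsingle : ℝ)
    (hmulti : IsGreatest {v : ℝ | ∃ x : Fin n → Fin m → ℝ,
      ((∀ j i, 0 ≤ x j i) ∧
       (∀ i, ∑ j, w j * x j i ≤ C i) ∧
       (∀ j, ∑ i, x j i ≤ 1)) ∧
      ∑ j, ∑ i, p j * x j i = v} OPTmulti)
    (hsingle : IsGreatest {v : ℝ | ∃ y : Fin n → ℝ,
      ((∀ j, 0 ≤ y j ∧ y j ≤ 1) ∧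
       ∑ j, w j * y j ≤ ∑ i, C i) ∧
      ∑ j, p j * y j = v} OPTsingle) :
    OPTmulti = OPTsingle :=
  multiKnapsack_lp_eq_surrogate_lp_general n m w hw p C hC OPTmulti OPTsingle hmulti hsingle
end

section
/- Assume the items are indexed so that p_1/w_1 ≥ … ≥ p_n/w_n and Σ_{j=1}^n w_j > Σ_{i=1}^m C_i; set s_0 = 0 and for k = 1,…,m let s_k = min{ j : Σ_{l=1}^j w_l > Σ_{i=1}^k C_i } be the critical item relative to knapsack k. Then max{ p_{s_1}, …, p_{s_m}, Σ_{k=1}^m Σ_{j=s_{k−1}+1}^{s_k−1} p_j } ≥ OPT_LP(C,w,p) / (m+1). -/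
/-!
Summing an LP solution over the knapsacks gives a fractional solution of a single knapsack of
capacity `∑ C i`. Since `∑ C i` is exceeded by the weight of the items `1, …, s m`, Dantzig's
exchange argument with the ratio `r = p (s m) / w (s m)` bounds its profit by `∑_{j ≤ s m} p j`.
The items `1, …, s m` are the `m` greedy segments together with the `m` critical items, so
`OPT ≤ G + m * M ≤ (m + 1) * max M G`, where `G` is the greedy profit and `M` the largest
critical-item profit.
-/

open Finset

namespace Knapsack

lemma sum_mul_ite_le_eq_sum_Icc {n t : ℕ} (ht : t ≤ n) (f : ℕ → ℝ) :
    ∑ j ∈ Icc 1 n, f j * (if j ≤ t then 1 else 0) = ∑ j ∈ Icc 1 t, f j := by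
  simp only [mul_ite, mul_one, mul_zero, ← sum_filter]
  congr 1
  ext j
  simp only [mem_filter, mem_Icc]
  omega

theorem fractional_knapsack_le_sum_prefix {n t : ℕ} {w p y : ℕ → ℝ} {W : ℝ}
    (hw : ∀ j ∈ Icc 1 n, 0 < w j) (hp : 0 ≤ p t)
    (hsorted : ∀ j ∈ Icc 1 n, ∀ k ∈ Icc 1 n, j ≤ k → p k / w k ≤ p j / w j)
    (htn : t ∈ Icc 1 n) (hy0 : ∀ j ∈ Icc 1 n, 0 ≤ y j) (hy1 : ∀ j ∈ Icc 1 n, y j ≤ 1)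
    (hyW : ∑ j ∈ Icc 1 n, w j * y j ≤ W) (hWt : W ≤ ∑ j ∈ Icc 1 t, w j) :
    ∑ j ∈ Icc 1 n, p j * y j ≤ ∑ j ∈ Icc 1 t, p j := by
  set r := p t / w t
  have hr : 0 ≤ r := div_nonneg hp (hw t htn).le
  -- Below `t` the ratio exceeds `r` and `y ≤ 1`; above `t` it is at most `r` and `y ≥ 0`.
  have hterm : ∀ j ∈ Icc 1 n,
      (p j - r * w j) * (y j - if j ≤ t then 1 else 0) ≤ 0 := by
    intro j hj
    have hwj := hw j hj
    split_ifs with hjt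
    · have : r * w j ≤ p j := (le_div_iff₀ hwj).mp (hsorted j hj t htn hjt)
      exact mul_nonpos_of_nonneg_of_nonpos (by linarith) (by linarith [hy1 j hj])
    · have : p j ≤ r * w j := (div_le_iff₀ hwj).mp (hsorted t htn j hj (by omega))
      exact mul_nonpos_of_nonpos_of_nonneg (by linarith) (by linarith [hy0 j hj])
  have hsum := sum_nonpos hterm
  simp only [sub_mul, mul_sub, sum_sub_distrib, mul_assoc, ← mul_sum,
    sum_mul_ite_le_eq_sum_Icc (mem_Icc.mp htn).2] at hsum
  nlinarith

theorem lp_value_le_sum_prefix {n m t : ℕ} {w p C : ℕ → ℝ} {x : ℕ → ℕ → ℝ}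
    (hw : ∀ j ∈ Icc 1 n, 0 < w j) (hp : 0 ≤ p t)
    (hsorted : ∀ j ∈ Icc 1 n, ∀ k ∈ Icc 1 n, j ≤ k → p k / w k ≤ p j / w j)
    (htn : t ∈ Icc 1 n) (htC : ∑ i ∈ Icc 1 m, C i ≤ ∑ j ∈ Icc 1 t, w j)
    (hx0 : ∀ j ∈ Icc 1 n, ∀ i ∈ Icc 1 m, 0 ≤ x j i)
    (hxC : ∀ i ∈ Icc 1 m, ∑ j ∈ Icc 1 n, w j * x j i ≤ C i)
    (hx1 : ∀ j ∈ Icc 1 n, ∑ i ∈ Icc 1 m, x j i ≤ 1) :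
    ∑ j ∈ Icc 1 n, ∑ i ∈ Icc 1 m, p j * x j i ≤ ∑ j ∈ Icc 1 t, p j := by
  simp only [← mul_sum]
  refine fractional_knapsack_le_sum_prefix hw hp hsorted htn
    (fun j hj => sum_nonneg (hx0 j hj)) hx1 ?_ htC
  calc ∑ j ∈ Icc 1 n, w j * ∑ i ∈ Icc 1 m, x j i
      = ∑ i ∈ Icc 1 m, ∑ j ∈ Icc 1 n, w j * x j i := by simp only [mul_sum]; exact sum_comm
    _ ≤ ∑ i ∈ Icc 1 m, C i := sum_le_sum hxC

lemma Icc_one_eq_Ioc_zero (b : ℕ) : Icc 1 b = Ioc 0 b :=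
  Icc_add_one_left_eq_Ioc 0 b

lemma sum_Ioc_le_sum_Icc_add {a b : ℕ} {p : ℕ → ℝ} (hab : a ≤ b) (hp : 0 ≤ p b) :
    ∑ j ∈ Ioc a b, p j ≤ ∑ j ∈ Icc (a + 1) (b - 1), p j + p b := by
  obtain rfl | hlt := hab.eq_or_lt
  · simp [hp]
  · obtain ⟨c, rfl⟩ : ∃ c, b = c + 1 := ⟨b - 1, by omega⟩
    rw [sum_Ioc_succ_top (by omega), Nat.add_sub_cancel, Icc_add_one_left_eq_Ioc]

theorem sum_Icc_le_sum_segments_add {K : ℕ} {p : ℕ → ℝ} {s : ℕ → ℕ} (hs0 : s 0 = 0)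
    (hmono : ∀ k ∈ Icc 1 K, s (k - 1) ≤ s k) (hp : ∀ k ∈ Icc 1 K, 0 ≤ p (s k)) :
    ∑ j ∈ Icc 1 (s K), p j ≤
      ∑ k ∈ Icc 1 K, (∑ j ∈ Icc (s (k - 1) + 1) (s k - 1), p j + p (s k)) := by
  induction K with
  | zero => simp [hs0]
  | succ K ih =>
    have hK : K + 1 ∈ Icc 1 (K + 1) := by simp
    have hle : s K ≤ s (K + 1) := hmono _ hK
    have hmono' : ∀ k ∈ Icc 1 K, s (k - 1) ≤ s k := fun k hk =>
      hmono k (Icc_subset_Icc_right K.le_succ hk)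
    have hp' : ∀ k ∈ Icc 1 K, 0 ≤ p (s k) := fun k hk =>
      hp k (Icc_subset_Icc_right K.le_succ hk)
    rw [sum_Icc_succ_top (by omega), Nat.add_sub_cancel, Icc_one_eq_Ioc_zero,
      ← sum_Ioc_consecutive _ (Nat.zero_le _) hle, ← Icc_one_eq_Ioc_zero]
    exact add_le_add (ih hmono' hp') (sum_Ioc_le_sum_Icc_add hle (hp _ hK))

theorem critical_item_pred_le {n m : ℕ} {w C : ℕ → ℝ} {s : ℕ → ℕ}
    (hC : ∀ i ∈ Icc 1 m, 0 ≤ C i) (hs0 : s 0 = 0)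
    (hs : ∀ k ∈ Icc 1 m,
      IsLeast {j | j ∈ Icc 1 n ∧ (∑ i ∈ Icc 1 k, C i) < ∑ l ∈ Icc 1 j, w l} (s k)) :
    ∀ k ∈ Icc 1 m, s (k - 1) ≤ s k := by
  intro k hk
  obtain ⟨hk1, hkm⟩ := mem_Icc.mp hk
  obtain rfl | hk1 := hk1.eq_or_lt
  · simp [hs0]
  refine (hs k hk).mono (hs (k - 1) (mem_Icc.mpr ⟨by omega, by omega⟩)) ?_
  rintro j ⟨hjn, hj⟩
  refine ⟨hjn, lt_of_le_of_lt (sum_le_sum_of_subset_of_nonneg ?_ fun i hi _ => ?_) hj⟩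
  · exact Icc_subset_Icc_right (by omega)
  · exact hC i (Icc_subset_Icc_right hkm hi)

end Knapsack

open Knapsack

theorem greedy_is_m_plus_one_approx_general
    (n m : ℕ) (hm : 1 ≤ m)
    (w p : ℕ → ℝ)
    (hw : ∀ j ∈ Finset.Icc 1 n, 0 < w j)
    (hp : ∀ j ∈ Finset.Icc 1 n, 0 ≤ p j)
    (C : ℕ → ℝ) (hC : ∀ i ∈ Finset.Icc 1 m, 0 ≤ C i)
    (hsorted : ∀ j ∈ Finset.Icc 1 n, ∀ k ∈ Finset.Icc 1 n, j ≤ k →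
      p k / w k ≤ p j / w j)
    (s : ℕ → ℕ) (hs0 : s 0 = 0)
    (hs : ∀ k ∈ Finset.Icc 1 m,
      IsLeast {j | j ∈ Finset.Icc 1 n ∧
        (∑ i ∈ Finset.Icc 1 k, C i) < ∑ l ∈ Finset.Icc 1 j, w l} (s k))
    (OPT : ℝ)
    (hOPT : IsGreatest {v : ℝ | ∃ x : ℕ → ℕ → ℝ,
      ((∀ j ∈ Finset.Icc 1 n, ∀ i ∈ Finset.Icc 1 m, 0 ≤ x j i) ∧
       (∀ i ∈ Finset.Icc 1 m, ∑ j ∈ Finset.Icc 1 n, w j * x j i ≤ C i) ∧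
       (∀ j ∈ Finset.Icc 1 n, ∑ i ∈ Finset.Icc 1 m, x j i ≤ 1)) ∧
      ∑ j ∈ Finset.Icc 1 n, ∑ i ∈ Finset.Icc 1 m, p j * x j i = v} OPT) :
    OPT / (m + 1) ≤
      max ((Finset.Icc 1 m).sup' (Finset.nonempty_Icc.mpr hm) (fun k => p (s k)))
          (∑ k ∈ Finset.Icc 1 m,
            ∑ j ∈ Finset.Icc (s (k - 1) + 1) (s k - 1), p j) := by
  obtain ⟨⟨x, ⟨hx0, hxC, hx1⟩, hval⟩, -⟩ := hOPT
  have hsn : ∀ k ∈ Icc 1 m, s k ∈ Icc 1 n := fun k hk => (hs k hk).1.1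
  have hmm : m ∈ Icc 1 m := mem_Icc.mpr ⟨hm, le_rfl⟩
  set M := (Icc 1 m).sup' (nonempty_Icc.mpr hm) (fun k => p (s k))
  set G := ∑ k ∈ Icc 1 m, ∑ j ∈ Icc (s (k - 1) + 1) (s k - 1), p j
  have hOPT_le : OPT ≤ G + m * M := calc
    OPT ≤ ∑ j ∈ Icc 1 (s m), p j := hval ▸ lp_value_le_sum_prefix hw (hp _ (hsn m hmm))
        hsorted (hsn m hmm) (hs m hmm).1.2.le hx0 hxC hx1
    _ ≤ ∑ k ∈ Icc 1 m, (∑ j ∈ Icc (s (k - 1) + 1) (s k - 1), p j + p (s k)) :=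
        sum_Icc_le_sum_segments_add hs0 (critical_item_pred_le hC hs0 hs)
          fun k hk => hp _ (hsn k hk)
    _ = G + ∑ k ∈ Icc 1 m, p (s k) := sum_add_distrib
    _ ≤ G + m * M := by
        grw [sum_le_card_nsmul _ _ M fun k hk => le_sup' (fun k => p (s k)) hk]
        simp
  have hM : 0 ≤ M := (hp _ (hsn m hmm)).trans (le_sup' (fun k => p (s k)) hmm)
  rw [div_le_iff₀ (by positivity)]
  nlinarith [le_max_left M G, le_max_right M G]

/-- Martello–Toth greedy bound: with items `1,…,n` sorted by nonincreasing
profit-to-weight ratio and `s k` the critical item relative to knapsack `k`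
(`s 0 = 0`), the best of the `m` critical-item profits and the profit of the
greedily packed integral part is at least `OPT_LP / (m+1)`. -/
theorem greedy_is_m_plus_one_approx
    (n m : ℕ) (hm : 1 ≤ m)
    (w p : ℕ → ℝ)
    (hw : ∀ j ∈ Finset.Icc 1 n, 0 < w j)
    (hp : ∀ j ∈ Finset.Icc 1 n, 0 ≤ p j)
    (C : ℕ → ℝ) (hC : ∀ i ∈ Finset.Icc 1 m, 0 ≤ C i)
    (hsorted : ∀ j ∈ Finset.Icc 1 n, ∀ k ∈ Finset.Icc 1 n, j ≤ k →
      p k / w k ≤ p j / w j)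
    (hsum : ∑ i ∈ Finset.Icc 1 m, C i < ∑ j ∈ Finset.Icc 1 n, w j)
    (s : ℕ → ℕ) (hs0 : s 0 = 0)
    (hs : ∀ k ∈ Finset.Icc 1 m,
      IsLeast {j | j ∈ Finset.Icc 1 n ∧
        (∑ i ∈ Finset.Icc 1 k, C i) < ∑ l ∈ Finset.Icc 1 j, w l} (s k))
    (OPT : ℝ)
    (hOPT : IsGreatest {v : ℝ | ∃ x : ℕ → ℕ → ℝ,
      ((∀ j ∈ Finset.Icc 1 n, ∀ i ∈ Finset.Icc 1 m, 0 ≤ x j i) ∧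
       (∀ i ∈ Finset.Icc 1 m, ∑ j ∈ Finset.Icc 1 n, w j * x j i ≤ C i) ∧
       (∀ j ∈ Finset.Icc 1 n, ∑ i ∈ Finset.Icc 1 m, x j i ≤ 1)) ∧
      ∑ j ∈ Finset.Icc 1 n, ∑ i ∈ Finset.Icc 1 m, p j * x j i = v} OPT) :
    OPT / (m + 1) ≤
      max ((Finset.Icc 1 m).sup' (Finset.nonempty_Icc.mpr hm) (fun k => p (s k)))
          (∑ k ∈ Finset.Icc 1 m,
            ∑ j ∈ Finset.Icc (s (k - 1) + 1) (s k - 1), p j) :=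
  greedy_is_m_plus_one_approx_general n m hm w p hw hp C hC hsorted s hs0 hs OPT hOPT
end

section
/- Assume the items are indexed so that p_1/w_1 ≥ … ≥ p_n/w_n and Σ_{j=1}^n w_j > Σ_{i=1}^m C_i; set s_0 = 0 and for k = 1,…,m let s_k = min{ j : Σ_{l=1}^j w_l > Σ_{i=1}^k C_i } be the critical item relative to knapsack k. Let L = max{ p_{s_1}, …, p_{s_m}, Σ_{k=1}^m Σ_{j=s_{k−1}+1}^{s_k−1} p_j } and let j* ∈ {s_1,…,s_m} be a critical item with maximal profit p_{j*}. If OPT_LP(C,w,p) > 0 then p_{j*} / OPT_LP(C,w,p) ≥ min{ 1/(m+1), (1/m)·(1 − L / OPT_LP(C,w,p)) }. -/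
/-!
Aggregating an LP solution over the knapsacks gives a solution of the single fractional knapsack
with capacity `∑ C i`. Pricing every unit of weight at the profit ratio of the critical item
`s m` of that knapsack (a feasible dual), its value is at most the profit of the prefix
`1, …, s m`. The consecutive critical items split this prefix into the blocks between them,
which contribute at most `L` in total, and the critical items themselves, each worth at most
`p j*`. Hence `OPT ≤ L + m · p j*`, which is the second term of the minimum.
-/

open Finset

theorem Finset.sum_mul_le_sum_of_ratio_threshold {ι : Type*} [DecidableEq ι] {S T : Finset ι} (hTS : T ⊆ S)
    {p w y : ι → ℝ} {ρ : ℝ} (hρ : 0 ≤ ρ)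
    (hT : ∀ j ∈ T, ρ * w j ≤ p j) (hST : ∀ j ∈ S \ T, p j ≤ ρ * w j)
    (hy0 : ∀ j ∈ S \ T, 0 ≤ y j) (hy1 : ∀ j ∈ T, y j ≤ 1)
    (hcap : ∑ j ∈ S, w j * y j ≤ ∑ j ∈ T, w j) :
    ∑ j ∈ S, p j * y j ≤ ∑ j ∈ T, p j := by
  have hreduced : ∑ j ∈ S, (p j - ρ * w j) * y j ≤ ∑ j ∈ T, (p j - ρ * w j) := by
    rw [← sum_sdiff hTS]
    have hout : ∑ j ∈ S \ T, (p j - ρ * w j) * y j ≤ 0 :=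
      sum_nonpos fun j hj =>
        mul_nonpos_of_nonpos_of_nonneg (sub_nonpos.2 (hST j hj)) (hy0 j hj)
    have hin : ∑ j ∈ T, (p j - ρ * w j) * y j ≤ ∑ j ∈ T, (p j - ρ * w j) :=
      sum_le_sum fun j hj => mul_le_of_le_one_right (sub_nonneg.2 (hT j hj)) (hy1 j hj)
    linarith
  calc ∑ j ∈ S, p j * y j
      = ∑ j ∈ S, (p j - ρ * w j) * y j + ρ * ∑ j ∈ S, w j * y j := by
        rw [mul_sum, ← sum_add_distrib]
        exact sum_congr rfl fun j _ => by ring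
    _ ≤ ∑ j ∈ T, (p j - ρ * w j) + ρ * ∑ j ∈ T, w j :=
        add_le_add hreduced (mul_le_mul_of_nonneg_left hcap hρ)
    _ = ∑ j ∈ T, p j := by rw [sum_sub_distrib, ← mul_sum]; ring

theorem sum_mul_le_prefix_sum_of_ratio_antitone {n t : ℕ} {p w y : ℕ → ℝ}
    (ht : t ∈ Icc 1 n) (hw : ∀ j ∈ Icc 1 n, 0 < w j) (hpt : 0 ≤ p t)
    (hsorted : ∀ j ∈ Icc 1 n, ∀ k ∈ Icc 1 n, j ≤ k → p k / w k ≤ p j / w j)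
    (hy0 : ∀ j ∈ Icc 1 n, 0 ≤ y j) (hy1 : ∀ j ∈ Icc 1 n, y j ≤ 1)
    (hcap : ∑ j ∈ Icc 1 n, w j * y j ≤ ∑ j ∈ Icc 1 t, w j) :
    ∑ j ∈ Icc 1 n, p j * y j ≤ ∑ j ∈ Icc 1 t, p j := by
  have htn : t ≤ n := (mem_Icc.1 ht).2
  have hprefix : Icc 1 t ⊆ Icc 1 n := Icc_subset_Icc_right htn
  refine sum_mul_le_sum_of_ratio_threshold hprefix (div_nonneg hpt (hw t ht).le)
    (fun j hj => ?_) (fun j hj => ?_) (fun j hj => hy0 j (sdiff_subset hj))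
    (fun j hj => hy1 j (hprefix hj)) hcap
  · have hjn := hprefix hj
    exact (le_div_iff₀ (hw j hjn)).1 (hsorted j hjn t ht (mem_Icc.1 hj).2)
  · obtain ⟨hjn, hjt⟩ := mem_sdiff.1 hj
    have htj : t ≤ j := by simp only [mem_Icc, not_and_or, not_le] at hjt hjn; omega
    exact (div_le_iff₀ (hw j hjn)).1 (hsorted t ht j hjn htj)

theorem lp_value_le_prefix_profit {n m t : ℕ} {p w C : ℕ → ℝ} {x : ℕ → ℕ → ℝ}
    (ht : t ∈ Icc 1 n) (hw : ∀ j ∈ Icc 1 n, 0 < w j) (hpt : 0 ≤ p t)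
    (hsorted : ∀ j ∈ Icc 1 n, ∀ k ∈ Icc 1 n, j ≤ k → p k / w k ≤ p j / w j)
    (hcrit : ∑ i ∈ Icc 1 m, C i < ∑ j ∈ Icc 1 t, w j)
    (hx0 : ∀ j ∈ Icc 1 n, ∀ i ∈ Icc 1 m, 0 ≤ x j i)
    (hxC : ∀ i ∈ Icc 1 m, ∑ j ∈ Icc 1 n, w j * x j i ≤ C i)
    (hx1 : ∀ j ∈ Icc 1 n, ∑ i ∈ Icc 1 m, x j i ≤ 1) :
    ∑ j ∈ Icc 1 n, ∑ i ∈ Icc 1 m, p j * x j i ≤ ∑ j ∈ Icc 1 t, p j := by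
  simp only [← mul_sum]
  refine sum_mul_le_prefix_sum_of_ratio_antitone ht hw hpt hsorted
    (fun j hj => sum_nonneg (hx0 j hj)) hx1 (le_of_lt (lt_of_le_of_lt ?_ hcrit))
  simp only [mul_sum]
  rw [sum_comm]
  exact sum_le_sum hxC

theorem critical_le_succ {n m : ℕ} {w C : ℕ → ℝ} {s : ℕ → ℕ} (hC : ∀ i ∈ Icc 1 m, 0 ≤ C i)
    (hs0 : s 0 = 0)
    (hs : ∀ k ∈ Icc 1 m,
      IsLeast {j | j ∈ Icc 1 n ∧ (∑ i ∈ Icc 1 k, C i) < ∑ l ∈ Icc 1 j, w l} (s k))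
    {k : ℕ} (hk : k < m) : s k ≤ s (k + 1) := by
  rcases Nat.eq_zero_or_pos k with rfl | hk1
  · simp [hs0]
  have hsucc : k + 1 ∈ Icc 1 m := mem_Icc.2 ⟨by omega, hk⟩
  refine (hs (k + 1) hsucc).mono (hs k (mem_Icc.2 ⟨hk1, hk.le⟩)) fun j ⟨hj, hlt⟩ => ⟨hj, ?_⟩
  rw [sum_Icc_succ_top (by omega)] at hlt
  linarith [hC (k + 1) hsucc]

theorem sum_Icc_eq_sum_blocks (f : ℕ → ℝ) {s : ℕ → ℕ} (hs0 : s 0 = 0) {K : ℕ}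
    (hmono : ∀ k < K, s k ≤ s (k + 1)) :
    ∑ j ∈ Icc 1 (s K), f j = ∑ k ∈ Icc 1 K, ∑ j ∈ Icc (s (k - 1) + 1) (s k), f j := by
  induction K with
  | zero => simp [hs0]
  | succ K ih =>
    rw [sum_Icc_succ_top (by omega), ← ih fun k hk => hmono k (by omega), Nat.add_sub_cancel]
    have hsplit := sum_Ioc_consecutive f (Nat.zero_le (s K)) (hmono K (by omega))
    simp only [← Icc_add_one_left_eq_Ioc, zero_add] at hsplit
    exact hsplit.symm

theorem sum_Icc_succ_le_sum_Icc_pred_add {f : ℕ → ℝ} {a b : ℕ} (hab : a ≤ b) (hfb : 0 ≤ f b) :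
    ∑ j ∈ Icc (a + 1) b, f j ≤ ∑ j ∈ Icc (a + 1) (b - 1), f j + f b := by
  rcases hab.eq_or_lt with rfl | hlt
  · simp [hfb]
  · have hsplit := sum_Icc_succ_top (show a + 1 ≤ b - 1 + 1 by omega) f
    rw [Nat.sub_add_cancel (by omega : 1 ≤ b)] at hsplit
    exact hsplit.le

theorem one_div_mul_one_sub_div_le_div {m OPT L q : ℝ} (hm : 0 < m) (hOPT : 0 < OPT)
    (hbound : OPT ≤ L + m * q) : 1 / m * (1 - L / OPT) ≤ q / OPT := by
  rw [show 1 / m * (1 - L / OPT) = (OPT - L) / m / OPT by field_simp]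
  gcongr
  rw [div_le_iff₀ hm]
  linarith

theorem best_critical_item_profit_bound_general
    (n m : ℕ) (hm : 1 ≤ m)
    (w p : ℕ → ℝ)
    (hw : ∀ j ∈ Finset.Icc 1 n, 0 < w j)
    (hp : ∀ j ∈ Finset.Icc 1 n, 0 ≤ p j)
    (C : ℕ → ℝ) (hC : ∀ i ∈ Finset.Icc 1 m, 0 ≤ C i)
    (hsorted : ∀ j ∈ Finset.Icc 1 n, ∀ k ∈ Finset.Icc 1 n, j ≤ k →
      p k / w k ≤ p j / w j)
    (s : ℕ → ℕ) (hs0 : s 0 = 0)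
    (hs : ∀ k ∈ Finset.Icc 1 m,
      IsLeast {j | j ∈ Finset.Icc 1 n ∧
        (∑ i ∈ Finset.Icc 1 k, C i) < ∑ l ∈ Finset.Icc 1 j, w l} (s k))
    (OPT : ℝ)
    (hOPT : IsGreatest {v : ℝ | ∃ x : ℕ → ℕ → ℝ,
      ((∀ j ∈ Finset.Icc 1 n, ∀ i ∈ Finset.Icc 1 m, 0 ≤ x j i) ∧
       (∀ i ∈ Finset.Icc 1 m, ∑ j ∈ Finset.Icc 1 n, w j * x j i ≤ C i) ∧
       (∀ j ∈ Finset.Icc 1 n, ∑ i ∈ Finset.Icc 1 m, x j i ≤ 1)) ∧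
      ∑ j ∈ Finset.Icc 1 n, ∑ i ∈ Finset.Icc 1 m, p j * x j i = v} OPT)
    (L : ℝ)
    (hL : L = max ((Finset.Icc 1 m).sup' (Finset.nonempty_Icc.mpr hm) (fun k => p (s k)))
          (∑ k ∈ Finset.Icc 1 m,
            ∑ j ∈ Finset.Icc (s (k - 1) + 1) (s k - 1), p j))
    (jstar : ℕ)
    (hjstar_max : ∀ k ∈ Finset.Icc 1 m, p (s k) ≤ p jstar)
    (hOPTpos : 0 < OPT) :
    min (1 / ((m : ℝ) + 1)) ((1 / (m : ℝ)) * (1 - L / OPT)) ≤ p jstar / OPT := by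
  obtain ⟨⟨x, ⟨hx0, hxC, hx1⟩, rfl⟩, -⟩ := hOPT
  have hcritical : ∀ k ∈ Icc 1 m, s k ∈ Icc 1 n := fun k hk => (hs k hk).1.1
  have hmono : ∀ k < m, s k ≤ s (k + 1) := fun k hk => critical_le_succ hC hs0 hs hk
  have hlast : m ∈ Icc 1 m := mem_Icc.2 ⟨hm, le_rfl⟩
  have hblocks : ∑ j ∈ Icc 1 (s m), p j
      ≤ ∑ k ∈ Icc 1 m, (∑ j ∈ Icc (s (k - 1) + 1) (s k - 1), p j + p jstar) := by
    rw [sum_Icc_eq_sum_blocks p hs0 hmono]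
    refine sum_le_sum fun k hk => ?_
    obtain ⟨hk1, hkm⟩ := mem_Icc.1 hk
    have hprev : s (k - 1) ≤ s k := by
      simpa [Nat.sub_add_cancel hk1] using hmono (k - 1) (by omega)
    linarith [sum_Icc_succ_le_sum_Icc_pred_add hprev (hp _ (hcritical k hk)), hjstar_max k hk]
  have hbound : ∑ j ∈ Icc 1 n, ∑ i ∈ Icc 1 m, p j * x j i ≤ L + m * p jstar := by
    have hLblocks : ∑ k ∈ Icc 1 m, ∑ j ∈ Icc (s (k - 1) + 1) (s k - 1), p j ≤ L :=
      hL ▸ le_max_right _ _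
    rw [sum_add_distrib, sum_const, Nat.card_Icc, nsmul_eq_mul] at hblocks
    push_cast at hblocks
    linarith [lp_value_le_prefix_profit (hcritical m hlast) hw (hp _ (hcritical m hlast))
      hsorted (hs m hlast).1.2 hx0 hxC hx1]
  exact (min_le_right _ _).trans
    (one_div_mul_one_sub_div_le_div (by exact_mod_cast hm) hOPTpos hbound)

/-- Relation between the profit of the most profitable critical item `j*` and the
gap between the greedy lower bound `L` and the LP optimum:
`p j* / OPT ≥ min ( 1/(m+1) , (1/m)·(1 − L/OPT) )`. -/
theorem best_critical_item_profit_bound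
    (n m : ℕ) (hm : 1 ≤ m)
    (w p : ℕ → ℝ)
    (hw : ∀ j ∈ Finset.Icc 1 n, 0 < w j)
    (hp : ∀ j ∈ Finset.Icc 1 n, 0 ≤ p j)
    (C : ℕ → ℝ) (hC : ∀ i ∈ Finset.Icc 1 m, 0 ≤ C i)
    (hsorted : ∀ j ∈ Finset.Icc 1 n, ∀ k ∈ Finset.Icc 1 n, j ≤ k →
      p k / w k ≤ p j / w j)
    (hsum : ∑ i ∈ Finset.Icc 1 m, C i < ∑ j ∈ Finset.Icc 1 n, w j)
    (s : ℕ → ℕ) (hs0 : s 0 = 0)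
    (hs : ∀ k ∈ Finset.Icc 1 m,
      IsLeast {j | j ∈ Finset.Icc 1 n ∧
        (∑ i ∈ Finset.Icc 1 k, C i) < ∑ l ∈ Finset.Icc 1 j, w l} (s k))
    (OPT : ℝ)
    (hOPT : IsGreatest {v : ℝ | ∃ x : ℕ → ℕ → ℝ,
      ((∀ j ∈ Finset.Icc 1 n, ∀ i ∈ Finset.Icc 1 m, 0 ≤ x j i) ∧
       (∀ i ∈ Finset.Icc 1 m, ∑ j ∈ Finset.Icc 1 n, w j * x j i ≤ C i) ∧
       (∀ j ∈ Finset.Icc 1 n, ∑ i ∈ Finset.Icc 1 m, x j i ≤ 1)) ∧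
      ∑ j ∈ Finset.Icc 1 n, ∑ i ∈ Finset.Icc 1 m, p j * x j i = v} OPT)
    (L : ℝ)
    (hL : L = max ((Finset.Icc 1 m).sup' (Finset.nonempty_Icc.mpr hm) (fun k => p (s k)))
          (∑ k ∈ Finset.Icc 1 m,
            ∑ j ∈ Finset.Icc (s (k - 1) + 1) (s k - 1), p j))
    (jstar : ℕ)
    (hjstar : ∃ k ∈ Finset.Icc 1 m, jstar = s k)
    (hjstar_max : ∀ k ∈ Finset.Icc 1 m, p (s k) ≤ p jstar)
    (hOPTpos : 0 < OPT) :
    min (1 / ((m : ℝ) + 1)) ((1 / (m : ℝ)) * (1 - L / OPT)) ≤ p jstar / OPT :=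
  best_critical_item_profit_bound_general n m hm w p hw hp C hC hsorted s hs0 hs OPT hOPT L hL jstar
    hjstar_max hOPTpos
end

section
/- In the single-knapsack setting with items indexed 1,…,n, weights w_j > 0 and capacity C ≥ 0, define the critical item of a ground set A ⊆ {1,…,n} with respect to capacity C' as min{ j ∈ A : Σ_{l∈A, l≤j} w_l > C' }. Let j* be the critical item of {1,…,n} with respect to C, and assume w_{j*} ≤ C and Σ_{l≠j*} w_l > C. Let j_1 be the critical item of {1,…,n}∖{j*} with respect to C − w_{j*}, and let j_2 be the critical item of {1,…,n}∖{j*} with respect to C. Then j_1 and j_2 exist and j_1 < j* < j_2. -/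
/-- `j` is the critical item of the ground set `A` with respect to capacity `C'`:
the least index in `A` such that the total weight of the items of `A` with index
at most `j` exceeds `C'`. -/
def IsCriticalItem (w : ℕ → ℝ) (A : Finset ℕ) (C' : ℝ) (j : ℕ) : Prop :=
  IsLeast {j' | j' ∈ A ∧ C' < ∑ l ∈ A.filter (· ≤ j'), w l} j

/-!
Removing `j*` does not change the prefix sums below `j*`. Since the prefix of `{1,…,n}`
strictly below `j*` already weighs more than `C - w j*`, the inclusion branch becomes
critical before `j*`; since no prefix below `j*` exceeds `C`, the exclusion branch
becomes critical only after `j*`.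
-/

theorem Finset.filter_erase_of_lt {A : Finset ℕ} {k j : ℕ} (hjk : j < k) :
    (A.erase k).filter (· ≤ j) = A.filter (· ≤ j) := by
  rw [Finset.filter_erase, Finset.erase_eq_of_notMem]
  simp only [Finset.mem_filter, not_and, not_le]
  exact fun _ ↦ hjk

theorem Finset.sum_filter_le_eq_add_sum_filter_lt {M : Type*} [AddCommMonoid M]
    {A : Finset ℕ} {k : ℕ} (hk : k ∈ A) (f : ℕ → M) :
    ∑ l ∈ A.filter (· ≤ k), f l = f k + ∑ l ∈ A.filter (· < k), f l := by
  have hinsert : A.filter (· ≤ k) = insert k (A.filter (· < k)) := by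
    ext l
    simp only [Finset.mem_filter, Finset.mem_insert, le_iff_lt_or_eq]
    constructor
    · rintro ⟨hl, hlk | rfl⟩ <;> tauto
    · rintro (rfl | ⟨hl, hlk⟩) <;> tauto
  rw [hinsert, Finset.sum_insert (by simp)]

namespace IsCriticalItem

variable {w : ℕ → ℝ} {A : Finset ℕ} {C' : ℝ}

theorem exists_le_of_mem {j : ℕ} (hj : j ∈ A) (h : C' < ∑ l ∈ A.filter (· ≤ j), w l) :
    ∃ j', IsCriticalItem w A C' j' ∧ j' ≤ j :=
  have hmin := isLeast_csInf
    (⟨j, hj, h⟩ : Set.Nonempty {j' | j' ∈ A ∧ C' < ∑ l ∈ A.filter (· ≤ j'), w l})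
  ⟨_, hmin, hmin.2 ⟨hj, h⟩⟩

theorem exists_lt {k : ℕ} (hC' : 0 ≤ C') (h : C' < ∑ l ∈ A.filter (· < k), w l) :
    ∃ j, IsCriticalItem w A C' j ∧ j < k := by
  have hne : (A.filter (· < k)).Nonempty := by
    by_contra hempty
    rw [Finset.not_nonempty_iff_eq_empty.mp hempty, Finset.sum_empty] at h
    linarith
  set m := (A.filter (· < k)).max' hne
  obtain ⟨hmA, hmk⟩ := Finset.mem_filter.mp ((A.filter (· < k)).max'_mem hne)
  have hprefix : A.filter (· ≤ m) = A.filter (· < k) := by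
    ext l
    simp only [Finset.mem_filter, and_congr_right_iff]
    exact fun hl ↦ ⟨fun hlm ↦ hlm.trans_lt hmk,
      fun hlk ↦ (A.filter (· < k)).le_max' l (Finset.mem_filter.mpr ⟨hl, hlk⟩)⟩
  obtain ⟨j, hj, hjm⟩ := exists_le_of_mem hmA (hprefix ▸ h)
  exact ⟨j, hj, hjm.trans_lt hmk⟩

theorem lt_of_erase {k j : ℕ} (hk : IsCriticalItem w A C' k)
    (hj : IsCriticalItem w (A.erase k) C' j) : k < j := by
  obtain ⟨hjk, hjA⟩ := Finset.mem_erase.mp hj.1.1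
  refine lt_of_le_of_ne (not_lt.mp fun hlt ↦ ?_) hjk.symm
  have hjcand := hj.1.2
  rw [Finset.filter_erase_of_lt hlt] at hjcand
  exact absurd (hk.2 ⟨hjA, hjcand⟩) (not_le.mpr hlt)

end IsCriticalItem

theorem critical_item_branching_general
    (n : ℕ) (w : ℕ → ℝ)
    (C : ℝ) (hC : 0 ≤ C)
    (jstar : ℕ)
    (hjstar : IsCriticalItem w (Finset.Icc 1 n) C jstar)
    (hfit : w jstar ≤ C)
    (hrest : C < ∑ l ∈ (Finset.Icc 1 n).erase jstar, w l) :
    ∃ j₁ j₂ : ℕ,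
      IsCriticalItem w ((Finset.Icc 1 n).erase jstar) (C - w jstar) j₁ ∧
      IsCriticalItem w ((Finset.Icc 1 n).erase jstar) C j₂ ∧
      j₁ < jstar ∧ jstar < j₂ := by
  set B := (Finset.Icc 1 n).erase jstar
  have hbelow : C - w jstar < ∑ l ∈ B.filter (· < jstar), w l := by
    have hprefix := hjstar.1.2
    rw [Finset.sum_filter_le_eq_add_sum_filter_lt hjstar.1.1] at hprefix
    rw [Finset.filter_erase, Finset.erase_eq_of_notMem (by simp)]
    linarith
  have hall : B.filter (· < n + 1) = B := Finset.filter_true_of_mem fun l hl ↦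
    Nat.lt_succ_of_le (Finset.mem_Icc.mp (Finset.mem_of_mem_erase hl)).2
  obtain ⟨j₁, hj₁, hj₁lt⟩ := IsCriticalItem.exists_lt (sub_nonneg.mpr hfit) hbelow
  obtain ⟨j₂, hj₂, -⟩ := IsCriticalItem.exists_lt hC (hall.symm ▸ hrest)
  exact ⟨j₁, j₂, hj₁, hj₂, hj₁lt, hjstar.lt_of_erase hj₂⟩

/-- Branching on the critical item `j*` of a single knapsack: in the inclusion
branch (ground set `{1,…,n} \ {j*}`, capacity `C − w j*`) and in the exclusion
branch (same ground set, capacity `C`) the critical items `j₁`, `j₂` exist and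
satisfy `j₁ < j* < j₂`. -/
theorem critical_item_branching
    (n : ℕ) (w : ℕ → ℝ) (hw : ∀ j ∈ Finset.Icc 1 n, 0 < w j)
    (C : ℝ) (hC : 0 ≤ C)
    (jstar : ℕ)
    (hjstar : IsCriticalItem w (Finset.Icc 1 n) C jstar)
    (hfit : w jstar ≤ C)
    (hrest : C < ∑ l ∈ (Finset.Icc 1 n).erase jstar, w l) :
    ∃ j₁ j₂ : ℕ,
      IsCriticalItem w ((Finset.Icc 1 n).erase jstar) (C - w jstar) j₁ ∧
      IsCriticalItem w ((Finset.Icc 1 n).erase jstar) C j₂ ∧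
      j₁ < jstar ∧ jstar < j₂ :=
  critical_item_branching_general n w C hC jstar hjstar hfit hrest
end

section
/- Let m ≥ 1 and let p'_1 ≥ p'_2 ≥ … ≥ p'_n > 0 be reals, let 1 ≤ k ≤ n, and let LB, UB be reals with LB ≥ (1/m) · Σ_{j=1}^n p'_j and UB ≤ LB + m · p'_k. Then UB / LB ≤ 1 + m² / k. -/
/-!
Since `p'` is nonincreasing, the `k` largest values are each at least `p'_k`, so
`k · p'_k ≤ Σ p'_j ≤ m · LB`. Hence the rounding excess `m · p'_k` is at most `(m² / k) · LB`.
-/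

open Finset

theorem Fin.succ_nsmul_le_sum_of_antitone {M : Type*} [AddCommMonoid M] [PartialOrder M]
    [IsOrderedAddMonoid M] {n : ℕ} {f : Fin n → M} (hf : Antitone f) (hf0 : ∀ j, 0 ≤ f j)
    (i : Fin n) : ((i : ℕ) + 1) • f i ≤ ∑ j, f j :=
  calc ((i : ℕ) + 1) • f i = #(Iic i) • f i := by rw [Fin.card_Iic]
    _ ≤ ∑ j ∈ Iic i, f j := card_nsmul_le_sum _ _ _ fun j hj => hf (mem_Iic.mp hj)
    _ ≤ ∑ j, f j := sum_le_univ_sum_of_nonneg hf0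

theorem div_le_one_add_sq_div_of_mul_le {m k q S LB UB : ℝ} (hm : 0 < m) (hk : 0 < k)
    (hq : 0 ≤ q) (hkq : k * q ≤ S) (hLB : 1 / m * S ≤ LB) (hUB : UB ≤ LB + m * q) :
    UB / LB ≤ 1 + m ^ 2 / k := by
  have hS : 0 ≤ S := (mul_nonneg hk.le hq).trans hkq
  have hLB0 : 0 ≤ LB := (by positivity : 0 ≤ 1 / m * S).trans hLB
  have hexcess : m * q ≤ m ^ 2 / k * LB :=
    calc m * q = m ^ 2 / k * (1 / m * (k * q)) := by field_simp
      _ ≤ m ^ 2 / k * (1 / m * S) := by gcongr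
      _ ≤ m ^ 2 / k * LB := by gcongr
  exact div_le_of_le_mul₀ hLB0 (by positivity) (by linarith)

/-- If `LB ≥ (1/m)·Σ p'_j` for nonincreasing positive `p'_1 ≥ … ≥ p'_n` and
`UB ≤ LB + m·p'_k`, then `UB / LB ≤ 1 + m²/k`. -/
theorem ub_lb_ratio_bound
    (m n k : ℕ) (hm : 1 ≤ m) (hk1 : 1 ≤ k) (hkn : k ≤ n)
    (p' : Fin n → ℝ) (hpos : ∀ j, 0 < p' j)
    (hsorted : ∀ j l : Fin n, j ≤ l → p' l ≤ p' j)
    (LB UB : ℝ)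
    (hLB : (1 / (m : ℝ)) * ∑ j, p' j ≤ LB)
    (hUB : UB ≤ LB + (m : ℝ) * p' ⟨k - 1, by omega⟩) :
    UB / LB ≤ 1 + (m : ℝ) ^ 2 / (k : ℝ) := by
  have hkq := Fin.succ_nsmul_le_sum_of_antitone hsorted (fun j => (hpos j).le) ⟨k - 1, by omega⟩
  rw [Fin.val_mk, Nat.sub_add_cancel hk1, nsmul_eq_mul] at hkq
  exact div_le_one_add_sq_div_of_mul_le (by positivity) (by positivity) (hpos _).le hkq hLB hUB
end
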